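/- arXiv:1802.07973 — 5 statements merged into one kernel-verified Lean document; each statement's English description precedes it below -/
import Mathlib

section
/- The function Θ_m(ξ) := 2^{2γ} |Γ(A_m + iξ/2)|² / |Γ(B_m + iξ/2)|², where A_m = 1/2 + γ/2 + (1/2)√((N/2-1)² + μ_m) and B_m = 1/2 - γ/2 + (1/2)√((N/2-1)² + μ_m), is strictly increasing in ξ on (0, ∞). -/
/-!
Write `R_{a,b}(t) = ‖Γ(a + it) / Γ(b + it)‖` for `0 < b < a`. Euler's product `GammaSeq` gives
`R_{a,b}(t) = lim n^{a-b} ∏_{j ≤ n} ‖(b + j + it) / (a + j + it)‖`, and each factor, whose square is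
`((b+j)² + t²) / ((a+j)² + t²)`, is nondecreasing in `t ≥ 0`; hence `R_{a,b}` is nondecreasing.
Strictness comes from `Γ(z + 1) = z Γ(z)`: `R_{a,b}(t) = ‖(b + it) / (a + it)‖ · R_{a+1,b+1}(t)`, a
strictly increasing positive factor times a nondecreasing positive one. The symbol is
`2^{2γ} R_{A,B}(ξ/2)²`, and the hypotheses give `0 < B < A`.
-/

open Finset Filter Topology

namespace Complex

lemma sq_norm_add_mul_I_div (a b t : ℝ) :
    ‖(b + t * I) / (a + t * I)‖ ^ 2 = (b ^ 2 + t ^ 2) / (a ^ 2 + t ^ 2) := by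
  rw [Complex.sq_norm, normSq_div, normSq_add_mul_I, normSq_add_mul_I]

lemma monotoneOn_norm_add_mul_I_div {a b : ℝ} (ha : a ≠ 0) (hab : b ^ 2 ≤ a ^ 2) :
    MonotoneOn (fun t : ℝ => ‖(b + t * I) / (a + t * I)‖) (Set.Ici 0) := by
  intro s (hs : 0 ≤ s) t _ hst
  rw [← sq_le_sq₀ (norm_nonneg _) (norm_nonneg _), sq_norm_add_mul_I_div,
    sq_norm_add_mul_I_div, div_le_div_iff₀ (by positivity) (by positivity)]
  nlinarith [mul_nonneg (sub_nonneg.2 hab) (sub_nonneg.2 (pow_le_pow_left₀ hs hst 2))]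

lemma strictMonoOn_norm_add_mul_I_div {a b : ℝ} (hab : b ^ 2 < a ^ 2) :
    StrictMonoOn (fun t : ℝ => ‖(b + t * I) / (a + t * I)‖) (Set.Ici 0) := by
  intro s (hs : 0 ≤ s) t _ hst
  have ha : a ≠ 0 := by rintro rfl; nlinarith
  rw [← sq_lt_sq₀ (norm_nonneg _) (norm_nonneg _), sq_norm_add_mul_I_div,
    sq_norm_add_mul_I_div, div_lt_div_iff₀ (by positivity) (by positivity)]
  nlinarith [mul_pos (sub_pos.2 hab) (sub_pos.2 (pow_lt_pow_left₀ hst hs two_ne_zero))]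

lemma GammaSeq_div_GammaSeq (z w : ℂ) (n : ℕ) :
    GammaSeq z n / GammaSeq w n =
      (n : ℂ) ^ z / (n : ℂ) ^ w * ∏ j ∈ range (n + 1), (w + j) / (z + j) := by
  have hf : (n.factorial : ℂ) ≠ 0 := by exact_mod_cast n.factorial_ne_zero
  rw [GammaSeq, GammaSeq, prod_div_distrib, div_div_div_eq,
    mul_right_comm _ _ (∏ j ∈ range (n + 1), (w + (j : ℂ))), ← mul_assoc, mul_div_mul_right _ _ hf]
  ring

lemma norm_GammaSeq_div_GammaSeq (a b t : ℝ) {n : ℕ} (hn : n ≠ 0) :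
    ‖GammaSeq (a + t * I) n / GammaSeq (b + t * I) n‖ =
      (n : ℝ) ^ a / (n : ℝ) ^ b *
        ∏ j ∈ range (n + 1), ‖(↑(b + j) + t * I) / (↑(a + j) + t * I)‖ := by
  rw [GammaSeq_div_GammaSeq, norm_mul, norm_div, norm_prod,
    norm_natCast_cpow_of_pos (Nat.pos_of_ne_zero hn),
    norm_natCast_cpow_of_pos (Nat.pos_of_ne_zero hn)]
  simp only [add_re, ofReal_re, mul_re, I_re, mul_zero, ofReal_im, I_im, mul_one, sub_self,
    add_zero, ofReal_add, ofReal_natCast, add_right_comm _ (t * I : ℂ)]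

lemma Gamma_div_Gamma_eq_mul_Gamma_add_one_div {z w : ℂ} (hz : z ≠ 0) (hw : w ≠ 0) :
    Gamma z / Gamma w = w / z * (Gamma (z + 1) / Gamma (w + 1)) := by
  rw [Gamma_add_one z hz, Gamma_add_one w hw, mul_div_mul_comm, ← mul_assoc,
    div_mul_div_cancel₀' hw, div_self hz, one_mul]

lemma Gamma_add_mul_I_ne_zero {a : ℝ} (ha : 0 < a) (t : ℝ) : Gamma (a + t * I) ≠ 0 :=
  Gamma_ne_zero_of_re_pos (by simpa using ha)

theorem monotoneOn_norm_Gamma_div_Gamma {a b : ℝ} (hb : 0 < b) (hab : b ≤ a) :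
    MonotoneOn (fun t : ℝ => ‖Gamma (a + t * I) / Gamma (b + t * I)‖) (Set.Ici 0) := by
  have hlim (t : ℝ) : Tendsto (fun n => ‖GammaSeq (a + t * I) n / GammaSeq (b + t * I) n‖) atTop
      (𝓝 ‖Gamma (a + t * I) / Gamma (b + t * I)‖) :=
    ((GammaSeq_tendsto_Gamma _).div (GammaSeq_tendsto_Gamma _)
      (Gamma_add_mul_I_ne_zero hb t)).norm
  intro s hs t ht hst
  refine le_of_tendsto_of_tendsto (hlim s) (hlim t) ?_
  filter_upwards [eventually_ne_atTop 0] with n hn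
  rw [norm_GammaSeq_div_GammaSeq _ _ _ hn, norm_GammaSeq_div_GammaSeq _ _ _ hn]
  gcongr with j
  have hj : (0 : ℝ) ≤ j := j.cast_nonneg
  exact monotoneOn_norm_add_mul_I_div (by linarith) (by gcongr) hs ht hst

theorem strictMonoOn_norm_Gamma_div_Gamma {a b : ℝ} (hb : 0 < b) (hab : b < a) :
    StrictMonoOn (fun t : ℝ => ‖Gamma (a + t * I) / Gamma (b + t * I)‖) (Set.Ici 0) := by
  have hshift (t : ℝ) : ‖Gamma (a + t * I) / Gamma (b + t * I)‖ =
      ‖(b + t * I) / (a + t * I)‖ * ‖Gamma (↑(a + 1) + t * I) / Gamma (↑(b + 1) + t * I)‖ := by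
    have hne {c : ℝ} (hc : 0 < c) : (c + t * I : ℂ) ≠ 0 := fun h => by
      simpa [hc.ne'] using congrArg re h
    rw [Gamma_div_Gamma_eq_mul_Gamma_add_one_div (hne (hb.trans hab)) (hne hb), norm_mul]
    push_cast
    ring_nf
  have hfactor := strictMonoOn_norm_add_mul_I_div (pow_lt_pow_left₀ hab hb.le two_ne_zero)
  have hshifted := monotoneOn_norm_Gamma_div_Gamma (a := a + 1) (b := b + 1) (by linarith)
    (by linarith)
  intro s hs t ht hst
  simp only [hshift]
  refine mul_lt_mul (hfactor hs ht hst) (hshifted hs ht hst.le) ?_ (norm_nonneg _)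
  exact norm_pos_iff.2 (div_ne_zero (Gamma_add_mul_I_ne_zero (by linarith) s)
    (Gamma_add_mul_I_ne_zero (by linarith) s))

end Complex

theorem stmt9_general (N : ℕ) (γ μ A B : ℝ) (hγ0 : 0 < γ)
    (hγN : γ < (N : ℝ) / 2) (hμ : 0 ≤ μ)
    (hA : A = 1 / 2 + γ / 2 + Real.sqrt (((N : ℝ) / 2 - 1) ^ 2 + μ) / 2)
    (hB : B = 1 / 2 - γ / 2 + Real.sqrt (((N : ℝ) / 2 - 1) ^ 2 + μ) / 2) :
    StrictMonoOn
      (fun ξ : ℝ =>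
        (2 : ℝ) ^ (2 * γ) *
          ‖Complex.Gamma ((A : ℂ) + (ξ : ℂ) / 2 * Complex.I)‖ ^ 2 /
          ‖Complex.Gamma ((B : ℂ) + (ξ : ℂ) / 2 * Complex.I)‖ ^ 2)
      (Set.Ioi 0) := by
  have hsqrt : (N : ℝ) / 2 - 1 ≤ Real.sqrt (((N : ℝ) / 2 - 1) ^ 2 + μ) :=
    (le_abs_self _).trans (Real.abs_le_sqrt (by linarith))
  have hB0 : 0 < B := by rw [hB]; linarith
  have hBA : B < A := by rw [hA, hB]; linarith
  have hR := Complex.strictMonoOn_norm_Gamma_div_Gamma hB0 hBA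
  intro s (hs : 0 < s) t (ht : 0 < t) hst
  have hhalf (ξ : ℝ) : (ξ : ℂ) / 2 = ↑(ξ / 2) := by push_cast; rfl
  simp only [mul_div_assoc, ← div_pow, ← norm_div, hhalf]
  gcongr
  exact hR (show 0 ≤ s / 2 by positivity) (show 0 ≤ t / 2 by positivity) (by linarith)

/-- The symbol `Θ_m(ξ) = 2^{2γ} |Γ(A_m + iξ/2)|²/|Γ(B_m + iξ/2)|²`, with
`A_m = 1/2 + γ/2 + √((N/2-1)² + μ_m)/2` and `B_m = 1/2 - γ/2 + √((N/2-1)² + μ_m)/2`,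
is strictly increasing in `ξ ∈ (0, ∞)`. -/
theorem stmt9 (N : ℕ) (hN : 2 ≤ N) (γ μ A B : ℝ) (hγ0 : 0 < γ)
    (hγN : γ < (N : ℝ) / 2) (hμ : 0 ≤ μ)
    (hA : A = 1 / 2 + γ / 2 + Real.sqrt (((N : ℝ) / 2 - 1) ^ 2 + μ) / 2)
    (hB : B = 1 / 2 - γ / 2 + Real.sqrt (((N : ℝ) / 2 - 1) ^ 2 + μ) / 2) :
    StrictMonoOn
      (fun ξ : ℝ =>
        (2 : ℝ) ^ (2 * γ) *
          ‖Complex.Gamma ((A : ℂ) + (ξ : ℂ) / 2 * Complex.I)‖ ^ 2 /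
          ‖Complex.Gamma ((B : ℂ) + (ξ : ℂ) / 2 * Complex.I)‖ ^ 2)
      (Set.Ioi 0) :=
  stmt9_general N γ μ A B hγ0 hγN hμ hA hB
end

section
/- The residue of the reciprocal symbol at the j-th pole equals c_j = (2/2^{2γ}) · Γ(1-γ+√((n/2-1)²+μ_m)+j) / (Γ(γ-j) Γ(1+√((n/2-1)²+μ_m)+j)) · (-i)(-1)^j/j!, and by Stirling's formula |c_j| ≍ C j^{-2γ} as j → ∞; in particular the series Σ_j c_j e^{-σ_j t} converges absolutely for every t > 0. -/
open Filter

/-- The poles `σ_j = 2(B_m + j)` of the reciprocal symbol, where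
`B_m = 1/2 - γ/2 + s/2` and `s = √((n/2-1)² + μ_m)`. -/
noncomputable def sigma13 (γ s : ℝ) (j : ℕ) : ℝ :=
  2 * ((1 / 2 - γ / 2 + s / 2) + (j : ℝ))

/-- The meromorphic extension of the symbol `Θ_m` (with `κ = 0`). -/
noncomputable def Theta13 (γ s : ℝ) (z : ℂ) : ℂ :=
  (((2 : ℝ) ^ (2 * γ) : ℝ) : ℂ) *
      Complex.Gamma (((1 / 2 + γ / 2 + s / 2 : ℝ) : ℂ) + z / 2 * Complex.I) *
      Complex.Gamma (((1 / 2 + γ / 2 + s / 2 : ℝ) : ℂ) - z / 2 * Complex.I) /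
    (Complex.Gamma (((1 / 2 - γ / 2 + s / 2 : ℝ) : ℂ) + z / 2 * Complex.I) *
      Complex.Gamma (((1 / 2 - γ / 2 + s / 2 : ℝ) : ℂ) - z / 2 * Complex.I))

/-- The claimed residue of `1/Θ_m` at the `j`-th pole. -/
noncomputable def res13 (γ s : ℝ) (j : ℕ) : ℂ :=
  ((2 / (2 : ℝ) ^ (2 * γ) * Real.Gamma (1 - γ + s + (j : ℝ)) /
      (Real.Gamma (γ - (j : ℝ)) * Real.Gamma (1 + s + (j : ℝ))) *
      (-1 : ℝ) ^ j / (j.factorial : ℝ) : ℝ) : ℂ) * (-Complex.I)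

/-!
Near `z₀ = iσ_j` the only singular factor of `1/Θ` is `Γ(B + iz/2)`, whose argument runs through
the pole `-j` of `Γ` with speed `i/2`. The residue `(-1)^j/j!` of `Γ` at `-j` (obtained from the
one at `0` by the functional equation), divided by `i/2` and multiplied by the value of the
remaining regular factor at `z₀`, is `c_j`.

The reflection formula `Γ(γ-j)Γ(1-γ+j) = (-1)^j π / sin(πγ)` gives
`|c_j| = K Γ(1-γ+s+j)Γ(1-γ+j) / (Γ(1+s+j) j!)` with `K = 2 sin(πγ) / (2^{2γ} π) > 0`, and Euler's
limit formula `Γ(x+n+1) ~ n! n^x` turns this into `|c_j| ~ K j^{-2γ}`. The series converges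
absolutely since `|c_j|` is bounded and `e^{-σ_j t}` decays geometrically.
-/

open Topology Nat Asymptotics

theorem Real.Gamma_add_nat_eq_prod_mul (x : ℝ) (n : ℕ) (hx : ∀ k < n, x + k ≠ 0) :
    Gamma (x + n) = (∏ k ∈ Finset.range n, (x + k)) * Gamma x := by
  induction n with
  | zero => simp
  | succ n ih =>
    rw [Nat.cast_succ, ← add_assoc, Gamma_add_one (hx n n.lt_succ_self),
      ih fun k hk => hx k (hk.trans n.lt_succ_self), Finset.prod_range_succ]
    ring

theorem Real.tendsto_Gamma_add_nat_add_one_div_factorial_mul_rpow {x : ℝ} (hx : -1 < x) :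
    Tendsto (fun n : ℕ => Gamma (x + n + 1) / (n ! * (n : ℝ) ^ x)) atTop (𝓝 1) := by
  -- Euler's formula `GammaSeq x n → Gamma x` is useless at `x = 0`, where `Gamma 0 = 0`.
  rcases eq_or_ne x 0 with rfl | hx0
  · refine tendsto_const_nhds.congr fun n => ?_
    rw [zero_add, Gamma_nat_eq_factorial, rpow_zero, mul_one, div_self (by positivity)]
  have hxk : ∀ k : ℕ, x + k ≠ 0 := fun k => by
    rcases k with _ | k
    · simpa using hx0
    · have : (0 : ℝ) ≤ k := k.cast_nonneg
      push_cast; linarith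
  have hΓ : Gamma x ≠ 0 := Gamma_ne_zero fun m hm => hxk m (by rw [hm, neg_add_cancel])
  have hratio : ∀ n : ℕ, Gamma (x + n + 1) / (n ! * (n : ℝ) ^ x) = Gamma x / GammaSeq x n := by
    intro n
    rw [GammaSeq, show x + n + 1 = x + (n + 1 : ℕ) by push_cast; ring,
      Gamma_add_nat_eq_prod_mul x (n + 1) fun k _ => hxk k, div_div_eq_mul_div]
    ring
  have hlim := (tendsto_const_nhds (x := Gamma x)).div (GammaSeq_tendsto_Gamma x) hΓ
  rw [div_self hΓ] at hlim
  exact hlim.congr fun n => (hratio n).symm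

open Real in
theorem Real.Gamma_sub_nat_mul_Gamma_one_sub_add_nat (x : ℝ) (j : ℕ) :
    Gamma (x - j) * Gamma (1 - x + j) = (-1) ^ j * π / sin (π * x) := by
  have h := Gamma_mul_Gamma_one_sub (x - j)
  rw [show 1 - (x - j) = 1 - x + j by ring, show π * (x - j) = π * x - j * π by ring,
    sin_sub_nat_mul_pi] at h
  rw [h]
  rcases neg_one_pow_eq_or ℝ j with h | h <;> rw [h] <;> ring

theorem Complex.continuousAt_Gamma_ofReal {x : ℝ} (hx : ∀ m : ℕ, x ≠ -m) :
    ContinuousAt Gamma x :=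
  continuousAt_Gamma _ fun m h => hx m (by exact_mod_cast h)

theorem Complex.tendsto_add_nat_mul_Gamma_nhdsNE_neg_nat (j : ℕ) :
    Tendsto (fun z : ℂ => (z + j) * Gamma z) (𝓝[≠] (-j)) (𝓝 ((-1) ^ j / j !)) := by
  induction j with
  | zero => simpa using tendsto_self_mul_Gamma_nhds_zero
  | succ j ih =>
    have hpt : (-(j + 1 : ℕ) : ℂ) + 1 = -j := by push_cast; ring
    have hshift : Tendsto (· + 1) (𝓝[≠] (-(j + 1 : ℕ) : ℂ)) (𝓝[≠] (-j : ℂ)) :=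
      hpt ▸ ((Homeomorph.addRight (1 : ℂ)).map_punctured_nhds_eq _).le
    have hne : (-(j + 1 : ℕ) : ℂ) ≠ 0 := neg_ne_zero.mpr (Nat.cast_ne_zero.mpr j.succ_ne_zero)
    have hquot := (ih.comp hshift).div (tendsto_nhdsWithin_of_tendsto_nhds tendsto_id) hne
    have hfeq : ∀ᶠ z in 𝓝[≠] (-(j + 1 : ℕ) : ℂ),
        ((z + 1) + j) * Gamma (z + 1) / z = (z + (j + 1 : ℕ)) * Gamma z := by
      filter_upwards [nhdsWithin_le_nhds (eventually_ne_nhds hne)] with z hz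
      rw [Gamma_add_one z hz]
      push_cast
      field_simp
      ring
    convert hquot.congr' hfeq using 2
    push_cast [factorial_succ]
    field_simp
    ring

theorem Complex.tendsto_sub_mul_Gamma_affine_mul {a b z₀ : ℂ} {g : ℂ → ℂ} {j : ℕ} (hb : b ≠ 0)
    (hpole : a + b * z₀ = -j) (hg : ContinuousAt g z₀) :
    Tendsto (fun z => (z - z₀) * (Gamma (a + b * z) * g z)) (𝓝[≠] z₀)
      (𝓝 ((-1) ^ j / j ! / b * g z₀)) := by
  have haffine : Tendsto (fun z => a + b * z) (𝓝[≠] z₀) (𝓝[≠] (-j : ℂ)) :=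
    hpole ▸ (((Homeomorph.mulLeft₀ b hb).trans (Homeomorph.addLeft a)).map_punctured_nhds_eq z₀).le
  refine ((((tendsto_add_nat_mul_Gamma_nhdsNE_neg_nat j).comp haffine).div_const b).mul
    (hg.tendsto.mono_left nhdsWithin_le_nhds)).congr fun z => ?_
  simp only [Function.comp_apply]
  field_simp
  linear_combination (Gamma (a + b * z) * g z) * hpole

open Real

theorem tendsto_sub_mul_inv_Theta13 {γ s : ℝ} (hγ0 : 0 < γ) (hγ1 : γ < 1) (hs : 0 ≤ s) (j : ℕ) :
    Tendsto (fun z : ℂ => (z - Complex.I * (sigma13 γ s j : ℂ)) * (Theta13 γ s z)⁻¹)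
      (𝓝[≠] (Complex.I * (sigma13 γ s j : ℂ))) (𝓝 (res13 γ s j)) := by
  set z₀ := Complex.I * (sigma13 γ s j : ℂ)
  set B : ℝ := 1 / 2 - γ / 2 + s / 2 with hB
  set A : ℝ := 1 / 2 + γ / 2 + s / 2 with hA
  set c : ℂ := (((2 : ℝ) ^ (2 * γ) : ℝ) : ℂ) with hc
  set g : ℂ → ℂ := fun z =>
    Complex.Gamma (B - z / 2 * Complex.I) /
      (c * Complex.Gamma (A + z / 2 * Complex.I) * Complex.Gamma (A - z / 2 * Complex.I))
  have hpole : (B : ℂ) + Complex.I / 2 * z₀ = -j := by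
    simp only [z₀, B, sigma13]; push_cast
    linear_combination (1 / 2 - γ / 2 + s / 2 + j : ℂ) * Complex.I_mul_I
  have h1 : (B : ℂ) - z₀ / 2 * Complex.I = (1 - γ + s + j : ℝ) := by
    simp only [z₀, B, sigma13]; push_cast
    linear_combination -(1 / 2 - γ / 2 + s / 2 + j : ℂ) * Complex.I_mul_I
  have h2 : (A : ℂ) + z₀ / 2 * Complex.I = (γ - j : ℝ) := by
    simp only [z₀, A, sigma13]; push_cast
    linear_combination (1 / 2 - γ / 2 + s / 2 + j : ℂ) * Complex.I_mul_I
  have h3 : (A : ℂ) - z₀ / 2 * Complex.I = (1 + s + j : ℝ) := by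
    simp only [z₀, A, sigma13]; push_cast
    linear_combination -(1 / 2 - γ / 2 + s / 2 + j : ℂ) * Complex.I_mul_I
  have hγj : ∀ m : ℕ, γ - j ≠ -m := by
    intro m h
    have hγ : γ = ((j - m : ℤ) : ℝ) := by push_cast; linarith
    have hlow : (0 : ℤ) < j - m := by exact_mod_cast hγ ▸ hγ0
    have hhigh : (j - m : ℤ) < 1 := by exact_mod_cast hγ ▸ hγ1
    omega
  have hpos : ∀ {x : ℝ}, 0 < x → ∀ m : ℕ, x ≠ -m := fun hx m h => by
    linarith [(m.cast_nonneg : (0 : ℝ) ≤ m)]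
  have hs1 : 0 < 1 + s + j := by positivity
  have hden : c * Complex.Gamma (A + z₀ / 2 * Complex.I) *
      Complex.Gamma (A - z₀ / 2 * Complex.I) ≠ 0 := by
    rw [h2, h3]
    exact mul_ne_zero (mul_ne_zero (by simp [c, (rpow_pos_of_pos two_pos _).ne'])
      (Complex.Gamma_ne_zero (fun m h => hγj m (by exact_mod_cast h))))
      (Complex.Gamma_ne_zero (fun m h => hpos hs1 m (by exact_mod_cast h)))
  have hg : ContinuousAt g z₀ := by
    refine ContinuousAt.div ?_ ?_ hden
    · exact (Complex.continuousAt_Gamma_ofReal (hpos (by linarith))).comp_of_eq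
        (f := fun z : ℂ => (B : ℂ) - z / 2 * Complex.I) (by fun_prop) h1
    · exact (continuousAt_const.mul ((Complex.continuousAt_Gamma_ofReal hγj).comp_of_eq
        (f := fun z : ℂ => (A : ℂ) + z / 2 * Complex.I) (by fun_prop) h2)).mul
        ((Complex.continuousAt_Gamma_ofReal (hpos hs1)).comp_of_eq
          (f := fun z : ℂ => (A : ℂ) - z / 2 * Complex.I) (by fun_prop) h3)
  have hfun : (fun z => (z - z₀) * (Theta13 γ s z)⁻¹) =
      fun z => (z - z₀) * (Complex.Gamma (B + Complex.I / 2 * z) * g z) := by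
    funext z
    rw [Theta13, inv_div, ← hA, ← hB, ← hc, show Complex.I / 2 * z = z / 2 * Complex.I by ring]
    simp only [g]
    ring
  rw [hfun]
  convert Complex.tendsto_sub_mul_Gamma_affine_mul (by simp : Complex.I / 2 ≠ 0) hpole hg using 2
  simp only [g, h1, h2, h3, Complex.Gamma_ofReal, res13, c]
  have := Real.Gamma_ne_zero hγj
  have := (Real.Gamma_pos_of_pos hs1).ne'
  have := (rpow_pos_of_pos two_pos (2 * γ)).ne'
  push_cast
  field_simp
  rw [Complex.I_sq]
  ring

theorem norm_res13 {γ s : ℝ} (hγ0 : 0 < γ) (hγ1 : γ < 1) (hs : 0 ≤ s) (j : ℕ) :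
    ‖res13 γ s j‖ = 2 * sin (π * γ) / (2 ^ (2 * γ) * π) *
      (Gamma (1 - γ + s + j) * Gamma (1 - γ + j) / (Gamma (1 + s + j) * j !)) := by
  have hsin : 0 < sin (π * γ) := sin_pos_of_pos_of_lt_pi (by positivity) (by nlinarith [pi_pos])
  have hΓ : 0 < Gamma (1 - γ + j) := Gamma_pos_of_pos (by positivity)
  have hΓs : 0 < Gamma (1 + s + j) := Gamma_pos_of_pos (by positivity)
  have hΓγ : Gamma (γ - j) = (-1) ^ j * π / (sin (π * γ) * Gamma (1 - γ + j)) := by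
    rw [eq_div_iff (by positivity), mul_left_comm, Gamma_sub_nat_mul_Gamma_one_sub_add_nat,
      mul_div_cancel₀ _ hsin.ne']
  have hre : 2 / (2 : ℝ) ^ (2 * γ) * Gamma (1 - γ + s + j) / (Gamma (γ - j) * Gamma (1 + s + j)) *
      (-1) ^ j / j ! = 2 * sin (π * γ) / (2 ^ (2 * γ) * π) *
        (Gamma (1 - γ + s + j) * Gamma (1 - γ + j) / (Gamma (1 + s + j) * j !)) := by
    rw [hΓγ]
    rcases neg_one_pow_eq_or ℝ j with h | h <;> rw [h] <;> field_simp
  rw [res13, norm_mul, Complex.norm_real, norm_neg, Complex.norm_I, mul_one, hre,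
    Real.norm_of_nonneg]
  have : 0 < Gamma (1 - γ + s + j) := Gamma_pos_of_pos (by linarith)
  positivity

theorem tendsto_norm_res13_div_rpow {γ s : ℝ} (hγ0 : 0 < γ) (hγ1 : γ < 1) (hs : 0 ≤ s) :
    Tendsto (fun j : ℕ => ‖res13 γ s j‖ / (j : ℝ) ^ (-(2 * γ))) atTop
      (𝓝 (2 * sin (π * γ) / (2 ^ (2 * γ) * π))) := by
  have hlim := ((tendsto_const_nhds (x := 2 * sin (π * γ) / (2 ^ (2 * γ) * π))).mul
    ((tendsto_Gamma_add_nat_add_one_div_factorial_mul_rpow (x := s - γ) (by linarith)).mul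
      (tendsto_Gamma_add_nat_add_one_div_factorial_mul_rpow (x := -γ) (by linarith)))).div
    (tendsto_Gamma_add_nat_add_one_div_factorial_mul_rpow (x := s) (by linarith)) one_ne_zero
  rw [mul_one, mul_one, div_one] at hlim
  refine hlim.congr' ((eventually_ge_atTop 1).mono fun j hj => ?_)
  have hj : (0 : ℝ) < j := by exact_mod_cast hj
  have hΓ : 0 < Gamma (1 + s + j) := Gamma_pos_of_pos (by positivity)
  dsimp only [Pi.div_apply]
  rw [norm_res13 hγ0 hγ1 hs, show (j : ℝ) ^ (-(2 * γ)) = j ^ (s - γ) * j ^ (-γ) / j ^ s by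
    rw [← rpow_add hj, ← rpow_sub hj]; ring_nf]
  rw [show s - γ + j + 1 = 1 - γ + s + j by ring, show -γ + j + 1 = 1 - γ + j by ring,
    show s + j + 1 = 1 + s + j by ring]
  field_simp

theorem eventually_le_and_le_of_tendsto_div {α : Type*} {l : Filter α} {u v : α → ℝ} {K : ℝ}
    (hK : 0 < K) (hv : ∀ᶠ a in l, 0 < v a) (h : Tendsto (fun a => u a / v a) l (𝓝 K)) :
    ∀ᶠ a in l, K / 2 * v a ≤ u a ∧ u a ≤ 2 * K * v a := by
  filter_upwards [hv, h.eventually_const_lt (half_lt_self hK),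
    h.eventually_lt_const (lt_two_mul_self hK)] with a hva hlow hhigh
  exact ⟨((lt_div_iff₀ hva).mp hlow).le, ((div_lt_iff₀ hva).mp hhigh).le⟩

theorem summable_mul_exp_neg_sigma13 (γ s : ℝ) {u : ℕ → ℝ} (hu : u =O[atTop] fun _ => (1 : ℝ))
    {t : ℝ} (ht : 0 < t) : Summable fun j => u j * exp (-sigma13 γ s j * t) := by
  have hgeom := (summable_geometric_of_lt_one (exp_nonneg (-2 * t))
    (exp_lt_one_iff.mpr (by linarith))).mul_left (exp (-(1 - γ + s) * t))
  have hexp : Summable fun j => exp (-sigma13 γ s j * t) := hgeom.congr fun j => by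
    rw [← exp_nat_mul, ← exp_add, sigma13]
    ring_nf
  exact summable_of_isBigO_nat hexp (by simpa using hu.mul (isBigO_refl _ atTop))

theorem stmt13_general (n : ℕ) (γ μ s : ℝ) (hγ0 : 0 < γ) (hγ1 : γ < 1)
    (hs : s = Real.sqrt (((n : ℝ) / 2 - 1) ^ 2 + μ)) :
    (∀ j : ℕ,
        Tendsto (fun z : ℂ => (z - Complex.I * ((sigma13 γ s j : ℝ) : ℂ)) * (Theta13 γ s z)⁻¹)
          (nhdsWithin (Complex.I * ((sigma13 γ s j : ℝ) : ℂ))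
            {Complex.I * ((sigma13 γ s j : ℝ) : ℂ)}ᶜ)
          (nhds (res13 γ s j))) ∧
      (∃ C₁ C₂ : ℝ, 0 < C₁ ∧ 0 < C₂ ∧
        ∀ᶠ j : ℕ in atTop,
          C₁ * (j : ℝ) ^ (-(2 * γ)) ≤ ‖res13 γ s j‖ ∧
            ‖res13 γ s j‖ ≤ C₂ * (j : ℝ) ^ (-(2 * γ))) ∧
      ∀ t : ℝ, 0 < t →
        Summable (fun j : ℕ => ‖res13 γ s j‖ * Real.exp (-(sigma13 γ s j) * t)) := by
  have hs0 : 0 ≤ s := hs ▸ sqrt_nonneg _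
  set K := 2 * sin (π * γ) / (2 ^ (2 * γ) * π)
  have hK : 0 < K := by
    have := sin_pos_of_pos_of_lt_pi (x := π * γ) (by positivity) (by nlinarith [pi_pos])
    positivity
  have hbounds := eventually_le_and_le_of_tendsto_div hK
    ((eventually_ge_atTop 1).mono fun j hj => rpow_pos_of_pos (by exact_mod_cast hj) _)
    (tendsto_norm_res13_div_rpow hγ0 hγ1 hs0)
  have hbdd : (fun j => ‖res13 γ s j‖) =O[atTop] fun _ => (1 : ℝ) := by
    refine IsBigO.of_bound (2 * K) ?_
    filter_upwards [hbounds, eventually_ge_atTop 1] with j hj hj1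
    rw [norm_norm, norm_one, mul_one]
    exact hj.2.trans (mul_le_of_le_one_right (by positivity)
      (rpow_le_one_of_one_le_of_nonpos (by exact_mod_cast hj1) (by linarith)))
  exact ⟨tendsto_sub_mul_inv_Theta13 hγ0 hγ1 hs0, ⟨_, _, half_pos hK, by positivity, hbounds⟩,
    fun t ht => summable_mul_exp_neg_sigma13 γ s hbdd ht⟩

/-- The residue of the reciprocal symbol at the `j`-th pole `i σ_j` equals
`c_j = (2/2^{2γ}) Γ(1-γ+s+j)/(Γ(γ-j)Γ(1+s+j)) · (-i)(-1)^j/j!`; moreover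
`|c_j| ≍ j^{-2γ}` as `j → ∞`, and the series `Σ_j c_j e^{-σ_j t}` converges
absolutely for every `t > 0`. -/
theorem stmt13 (n : ℕ) (hn : 2 ≤ n) (γ μ s : ℝ) (hγ0 : 0 < γ) (hγ1 : γ < 1)
    (hμ : 0 ≤ μ) (hs : s = Real.sqrt (((n : ℝ) / 2 - 1) ^ 2 + μ)) :
    (∀ j : ℕ,
        Tendsto (fun z : ℂ => (z - Complex.I * ((sigma13 γ s j : ℝ) : ℂ)) * (Theta13 γ s z)⁻¹)
          (nhdsWithin (Complex.I * ((sigma13 γ s j : ℝ) : ℂ))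
            {Complex.I * ((sigma13 γ s j : ℝ) : ℂ)}ᶜ)
          (nhds (res13 γ s j))) ∧
      (∃ C₁ C₂ : ℝ, 0 < C₁ ∧ 0 < C₂ ∧
        ∀ᶠ j : ℕ in atTop,
          C₁ * (j : ℝ) ^ (-(2 * γ)) ≤ ‖res13 γ s j‖ ∧
            ‖res13 γ s j‖ ≤ C₂ * (j : ℝ) ^ (-(2 * γ))) ∧
      ∀ t : ℝ, 0 < t →
        Summable (fun j : ℕ => ‖res13 γ s j‖ * Real.exp (-(sigma13 γ s j) * t)) :=
  stmt13_general n γ μ s hγ0 hγ1 hs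
end

section
/- Let f₁, f₂ : ℝ → ℝ with f₁(t) = O(e^{-a|t|}) as |t| → ∞, f₂(t) = O(e^{-a₊ t}) as t → +∞ and f₂(t) = O(e^{a₋ t}) as t → -∞, where a, a₊ > 0 and a₋ > -a, and with a ≠ a₊. Then the convolution f₁ * f₂(t) = ∫_ℝ f₁(t-s) f₂(s) ds satisfies f₁ * f₂(t) = O(e^{-min(a, a₊) t}) as t → +∞. -/
/-!
Extend the tail bounds to global ones, `|f₁ u| ≤ D₁ e^{-a|u|}` and `|f₂ s| ≤ D₂ e^{ψ(s)}` with
`ψ(s) = a₋ min(s, 0) - a₊ max(s, 0)`, using local boundedness on the remaining compact interval.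
For `t ≥ 0` the exponent `-a|t - s| + ψ(s)` of the product is at most
`-min(a, a₊) t - c|s|` or `-min(a, a₊) t - c|t - s|`, where `c = min(a, a + a₋, |a - a₊|)`;
`c > 0` needs `a ≠ a₊`, since for `a = a₊` the range `0 ≤ s ≤ t` contributes `t e^{-at}`.
Integrating the two decaying kernels gives `|f₁ * f₂(t)| ≤ D₁ D₂ (4 / c) e^{-min(a, a₊) t}`.
-/

open MeasureTheory Set Real

lemma exists_pos_abs_le_mul_exp_of_tail {f φ : ℝ → ℝ} (hφ : Continuous φ)
    (hloc : ∀ r : ℝ, 0 < r → ∃ M : ℝ, ∀ t : ℝ, |t| ≤ r → |f t| ≤ M)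
    (htail : ∃ T C : ℝ, ∀ t : ℝ, T ≤ |t| → |f t| ≤ C * exp (φ t)) :
    ∃ D : ℝ, 0 < D ∧ ∀ t : ℝ, |f t| ≤ D * exp (φ t) := by
  obtain ⟨T, C, hC⟩ := htail
  obtain ⟨M, hM⟩ := hloc (|T| + 1) (by positivity)
  obtain ⟨L, hL⟩ := (isCompact_Icc (a := -(|T| + 1)) (b := |T| + 1)).bddBelow_image hφ.continuousOn
  refine ⟨|C| + |M| * exp (-L) + 1, by positivity, fun t => ?_⟩
  rcases le_or_gt T |t| with hT | hT
  · calc |f t| ≤ C * exp (φ t) := hC t hT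
      _ ≤ (|C| + |M| * exp (-L) + 1) * exp (φ t) := by
          gcongr
          linarith [le_abs_self C, mul_nonneg (abs_nonneg M) (exp_pos (-L)).le]
  · have ht : |t| ≤ |T| + 1 := by linarith [le_abs_self T]
    have hLt : L ≤ φ t := hL ⟨t, abs_le.1 ht, rfl⟩
    calc |f t| ≤ |M| := (hM t ht).trans (le_abs_self M)
      _ ≤ |M| * exp (-L) * exp (φ t) := by
          rw [mul_assoc, ← exp_add]
          exact le_mul_of_one_le_right (abs_nonneg M) (one_le_exp (by linarith))
      _ ≤ (|C| + |M| * exp (-L) + 1) * exp (φ t) := by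
          gcongr
          linarith [abs_nonneg C]

lemma exists_abs_le_mul_exp_of_atTop_of_atBot {f : ℝ → ℝ} {aP aM : ℝ}
    (hP : ∃ T C : ℝ, ∀ t : ℝ, T ≤ t → |f t| ≤ C * exp (-aP * t))
    (hM : ∃ T C : ℝ, ∀ t : ℝ, t ≤ -T → |f t| ≤ C * exp (aM * t)) :
    ∃ T C : ℝ, ∀ t : ℝ, T ≤ |t| → |f t| ≤ C * exp (aM * min t 0 - aP * max t 0) := by
  obtain ⟨TP, CP, hP⟩ := hP
  obtain ⟨TM, CM, hM⟩ := hM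
  refine ⟨max TP TM, max CP CM, fun t ht => ?_⟩
  rcases le_total 0 t with h | h
  · rw [abs_of_nonneg h] at ht
    rw [min_eq_right h, max_eq_left h, mul_zero, zero_sub, ← neg_mul]
    exact (hP t (le_of_max_le_left ht)).trans (by gcongr; exact le_max_left _ _)
  · rw [abs_of_nonpos h] at ht
    rw [min_eq_left h, max_eq_right h, mul_zero, sub_zero]
    exact (hM t (by linarith [le_max_right TP TM])).trans (by gcongr; exact le_max_right _ _)

lemma kernel_exponent_le_or {a aP aM c t s : ℝ} (haP : 0 ≤ aP) (hca : c ≤ a) (hcM : c ≤ a + aM)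
    (hcP : c ≤ |a - aP|) (ht : 0 ≤ t) :
    -a * |t - s| + (aM * min s 0 - aP * max s 0) ≤ -min a aP * t - c * |s| ∨
      -a * |t - s| + (aM * min s 0 - aP * max s 0) ≤ -min a aP * t - c * |t - s| := by
  have hma : (min a aP - a) * t ≤ 0 := mul_nonpos_of_nonpos_of_nonneg (by simp) ht
  have hmP : min a aP * t ≤ aP * t := mul_le_mul_of_nonneg_right (min_le_right a aP) ht
  rcases le_total s 0 with hs | hs
  · left
    rw [abs_of_nonneg (by linarith : 0 ≤ t - s), abs_of_nonpos hs, min_eq_left hs,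
      max_eq_right hs]
    nlinarith
  rw [abs_of_nonneg hs, min_eq_right hs, max_eq_left hs]
  rcases le_total s t with hst | hst
  · rw [abs_of_nonneg (by linarith : 0 ≤ t - s)]
    rcases le_total a aP with haa | haa
    · left
      rw [abs_of_nonpos (by linarith : a - aP ≤ 0)] at hcP
      rw [min_eq_left haa]
      nlinarith
    · right
      rw [abs_of_nonneg (by linarith : 0 ≤ a - aP)] at hcP
      rw [min_eq_right haa]
      nlinarith
  · right
    rw [abs_of_nonpos (by linarith : t - s ≤ 0)]
    nlinarith

lemma abs_mul_le_mul_exp_kernel {f₁ f₂ : ℝ → ℝ} {a aP aM c D₁ D₂ t : ℝ} (haP : 0 ≤ aP)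
    (hca : c ≤ a) (hcM : c ≤ a + aM) (hcP : c ≤ |a - aP|) (ht : 0 ≤ t)
    (hf₁ : ∀ u, |f₁ u| ≤ D₁ * exp (-a * |u|))
    (hf₂ : ∀ s, |f₂ s| ≤ D₂ * exp (aM * min s 0 - aP * max s 0)) (s : ℝ) :
    |f₁ (t - s) * f₂ s| ≤
      D₁ * D₂ * exp (-min a aP * t) * (exp (-c * |s|) + exp (-c * |t - s|)) := by
  have hD₁ : 0 ≤ D₁ := nonneg_of_mul_nonneg_left ((abs_nonneg _).trans (hf₁ 0)) (exp_pos _)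
  have hD₂ : 0 ≤ D₂ := nonneg_of_mul_nonneg_left ((abs_nonneg _).trans (hf₂ 0)) (exp_pos _)
  have hexp : exp (-a * |t - s| + (aM * min s 0 - aP * max s 0)) ≤
      exp (-min a aP * t - c * |s|) + exp (-min a aP * t - c * |t - s|) := by
    rcases kernel_exponent_le_or (s := s) haP hca hcM hcP ht with h | h
    · exact (exp_le_exp.2 h).trans (le_add_of_nonneg_right (exp_pos _).le)
    · exact (exp_le_exp.2 h).trans (le_add_of_nonneg_left (exp_pos _).le)
  calc |f₁ (t - s) * f₂ s| = |f₁ (t - s)| * |f₂ s| := abs_mul _ _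
    _ ≤ D₁ * exp (-a * |t - s|) * (D₂ * exp (aM * min s 0 - aP * max s 0)) :=
        mul_le_mul (hf₁ _) (hf₂ s) (abs_nonneg _) (by positivity)
    _ = D₁ * D₂ * exp (-a * |t - s| + (aM * min s 0 - aP * max s 0)) := by
        rw [exp_add]; ring
    _ ≤ D₁ * D₂ * (exp (-min a aP * t - c * |s|) + exp (-min a aP * t - c * |t - s|)) := by
        gcongr
    _ = D₁ * D₂ * exp (-min a aP * t) * (exp (-c * |s|) + exp (-c * |t - s|)) := by
        simp only [sub_eq_add_neg, exp_add, ← neg_mul]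
        ring

lemma integral_exp_neg_mul_abs {c : ℝ} (hc : 0 < c) : ∫ x : ℝ, exp (-c * |x|) = 2 / c := by
  rw [integral_comp_abs (f := fun x => exp (-c * x)), integral_exp_mul_Ioi (by linarith)]
  field_simp
  simp

lemma integrable_exp_neg_mul_abs {c : ℝ} (hc : 0 < c) : Integrable fun x : ℝ => exp (-c * |x|) :=
  Integrable.of_integral_ne_zero (by rw [integral_exp_neg_mul_abs hc]; positivity)

theorem stmt14_general (f₁ f₂ : ℝ → ℝ) (a aP aM : ℝ)
    (ha : 0 < a) (haP : 0 < aP) (haM : -a < aM) (hne : a ≠ aP)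
    (hloc₁ : ∀ r : ℝ, 0 < r → ∃ M : ℝ, ∀ t : ℝ, |t| ≤ r → |f₁ t| ≤ M)
    (hloc₂ : ∀ r : ℝ, 0 < r → ∃ M : ℝ, ∀ t : ℝ, |t| ≤ r → |f₂ t| ≤ M)
    (h₁ : ∃ T C : ℝ, 0 < C ∧ ∀ t : ℝ, T ≤ |t| → |f₁ t| ≤ C * Real.exp (-a * |t|))
    (h₂P : ∃ T C : ℝ, 0 < C ∧ ∀ t : ℝ, T ≤ t → |f₂ t| ≤ C * Real.exp (-aP * t))
    (h₂M : ∃ T C : ℝ, 0 < C ∧ ∀ t : ℝ, t ≤ -T → |f₂ t| ≤ C * Real.exp (aM * t)) :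
    ∃ T C : ℝ, 0 < C ∧ ∀ t : ℝ, T ≤ t →
      |∫ s : ℝ, f₁ (t - s) * f₂ s| ≤ C * Real.exp (-(min a aP) * t) := by
  have forget_pos {P : ℝ → ℝ → Prop} : (∃ T C : ℝ, 0 < C ∧ P T C) → ∃ T C, P T C :=
    fun ⟨T, C, _, h⟩ => ⟨T, C, h⟩
  obtain ⟨D₁, hD₁, hf₁⟩ := exists_pos_abs_le_mul_exp_of_tail (by fun_prop) hloc₁ (forget_pos h₁)
  obtain ⟨D₂, hD₂, hf₂⟩ := exists_pos_abs_le_mul_exp_of_tail (by fun_prop) hloc₂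
    (exists_abs_le_mul_exp_of_atTop_of_atBot (forget_pos h₂P) (forget_pos h₂M))
  set c := min (min a (a + aM)) |a - aP|
  have hc : 0 < c := lt_min (lt_min ha (by linarith)) (abs_pos.2 (sub_ne_zero.2 hne))
  have hk := integrable_exp_neg_mul_abs hc
  refine ⟨0, D₁ * D₂ * (4 / c), by positivity, fun t ht => ?_⟩
  calc |∫ s, f₁ (t - s) * f₂ s| ≤ ∫ s, |f₁ (t - s) * f₂ s| := abs_integral_le_integral_abs
    _ ≤ ∫ s, D₁ * D₂ * exp (-min a aP * t) * (exp (-c * |s|) + exp (-c * |t - s|)) :=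
        integral_mono_of_nonneg (ae_of_all _ fun _ => abs_nonneg _)
          ((hk.add (hk.comp_sub_left t)).const_mul _)
          (ae_of_all _ (abs_mul_le_mul_exp_kernel haP.le (by simp [c]) (by simp [c])
            (by simp [c]) ht hf₁ hf₂))
    _ = D₁ * D₂ * (4 / c) * exp (-min a aP * t) := by
        rw [integral_const_mul, integral_add hk (hk.comp_sub_left t),
          integral_sub_left_eq_self (fun s => exp (-c * |s|)), integral_exp_neg_mul_abs hc]
        ring

/-- Convolution of exponentially decaying functions: if `f₁(t) = O(e^{-a|t|})`
as `|t| → ∞`, `f₂(t) = O(e^{-a₊ t})` as `t → +∞`, `f₂(t) = O(e^{a₋ t})` as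
`t → -∞`, with `a, a₊ > 0`, `a₋ > -a`, `a ≠ a₊`, and both functions are
measurable and bounded on compacts, then
`f₁ * f₂(t) = O(e^{-min(a,a₊) t})` as `t → +∞`. -/
theorem stmt14 (f₁ f₂ : ℝ → ℝ) (a aP aM : ℝ)
    (ha : 0 < a) (haP : 0 < aP) (haM : -a < aM) (hne : a ≠ aP)
    (hm₁ : Measurable f₁) (hm₂ : Measurable f₂)
    (hloc₁ : ∀ r : ℝ, 0 < r → ∃ M : ℝ, ∀ t : ℝ, |t| ≤ r → |f₁ t| ≤ M)
    (hloc₂ : ∀ r : ℝ, 0 < r → ∃ M : ℝ, ∀ t : ℝ, |t| ≤ r → |f₂ t| ≤ M)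
    (h₁ : ∃ T C : ℝ, 0 < C ∧ ∀ t : ℝ, T ≤ |t| → |f₁ t| ≤ C * Real.exp (-a * |t|))
    (h₂P : ∃ T C : ℝ, 0 < C ∧ ∀ t : ℝ, T ≤ t → |f₂ t| ≤ C * Real.exp (-aP * t))
    (h₂M : ∃ T C : ℝ, 0 < C ∧ ∀ t : ℝ, t ≤ -T → |f₂ t| ≤ C * Real.exp (aM * t)) :
    ∃ T C : ℝ, 0 < C ∧ ∀ t : ℝ, T ≤ t →
      |∫ s : ℝ, f₁ (t - s) * f₂ s| ≤ C * Real.exp (-(min a aP) * t) :=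
  stmt14_general f₁ f₂ a aP aM ha haP haM hne hloc₁ hloc₂ h₁ h₂P h₂M
end

section
/- For z in the upper half-plane with |z| → ∞ and 0 < α - β < 1, write z = iR + ζ; then Stirling's formula gives |Γ(1-β+R-iζ)Γ(α+R-iζ) / (Γ(1-α+R-iζ)Γ(β+R-iζ))| ≍ (R²+ζ²)^{α-β} (up to constants depending only on α, β) for R²+ζ² sufficiently large. -/
/-!
Wendel's argument. Put `δ = α - β ∈ (0, 1)`. For `Re z > 0` the substitution `t = e^{-u}` turns
the beta integral into `B(z, δ) = ∫₀^∞ e^{-zu} (1 - e^{-u})^{δ-1} du`, while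
`∫₀^∞ e^{-zu} u^{δ-1} du = Γ(δ) z^{-δ}` (both sides are holomorphic in `z` and agree for real
`z > 0`). The difference of the two kernels vanishes at `0` and its derivative is bounded by
`u^{δ-1}`, so one integration by parts gives `‖B(z, δ) - Γ(δ) z^{-δ}‖ ≤ Γ(δ) / ‖z‖` for
`Re z ≥ 1`. Hence `Γ(z + δ) / Γ(z) = Γ(δ) / B(z, δ) ≍ ‖z‖^δ` as `z → ∞` with `Re z ≥ 1`, and the
recurrence `Γ(z + 1) = z Γ(z)` carries this over to every half-plane `Re z ≥ L`. With
`w = R - iζ`, the ratio in the theorem is the product of these quotients at `z = w + β` and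
`z = w + 1 - α`.
-/

/-- The Gamma-ratio `Γ(1-β+R-iζ)Γ(α+R-iζ)/(Γ(1-α+R-iζ)Γ(β+R-iζ))`. -/
noncomputable def gammaRatio17 (α β R ζ : ℝ) : ℂ :=
  Complex.Gamma (((1 - β + R : ℝ) : ℂ) - (ζ : ℂ) * Complex.I) *
      Complex.Gamma (((α + R : ℝ) : ℂ) - (ζ : ℂ) * Complex.I) /
    (Complex.Gamma (((1 - α + R : ℝ) : ℂ) - (ζ : ℂ) * Complex.I) *
      Complex.Gamma (((β + R : ℝ) : ℂ) - (ζ : ℂ) * Complex.I))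

open MeasureTheory Set Filter Topology Asymptotics Bornology

lemma integrableOn_exp_neg_mul_mul_rpow {b s : ℝ} (hb : 0 < b) (hs : -1 < s) :
    IntegrableOn (fun t : ℝ => Real.exp (-(b * t)) * t ^ s) (Ioi 0) := by
  simpa [Real.rpow_one, mul_comm] using integrableOn_rpow_mul_exp_neg_mul_rpow hs one_pos hb

lemma norm_cexp_neg_mul_mul_ofReal (z : ℂ) (t c : ℝ) :
    ‖Complex.exp (-z * t) * c‖ = Real.exp (-(z.re * t)) * |c| := by
  rw [norm_mul, Complex.norm_exp, Complex.norm_real, Real.norm_eq_abs]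
  simp [Complex.mul_re]

lemma exp_neg_mul_le_of_le {a b t : ℝ} (hab : b ≤ a) (ht : 0 ≤ t) :
    Real.exp (-(a * t)) ≤ Real.exp (-(b * t)) :=
  Real.exp_le_exp.2 (by nlinarith)

lemma integrableOn_cexp_neg_mul_of_abs_le_rpow {z : ℂ} {b s : ℝ} (hb : 0 < b) (hz : b ≤ z.re)
    (hs : -1 < s) {f : ℝ → ℝ} (hf : Measurable f) (hbound : ∀ t ∈ Ioi (0 : ℝ), |f t| ≤ t ^ s) :
    IntegrableOn (fun t : ℝ => Complex.exp (-z * t) * f t) (Ioi 0) := by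
  refine (integrableOn_exp_neg_mul_mul_rpow hb hs).mono' (by fun_prop)
    (ae_restrict_of_forall_mem measurableSet_Ioi fun t ht => ?_)
  rw [norm_cexp_neg_mul_mul_ofReal]
  exact mul_le_mul (exp_neg_mul_le_of_le hz (le_of_lt ht)) (hbound t ht) (abs_nonneg _)
    (Real.exp_pos _).le

lemma differentiableOn_integral_cexp_neg_mul_rpow {δ : ℝ} (hδ : 0 < δ) :
    DifferentiableOn ℂ (fun z : ℂ => ∫ t in Ioi (0 : ℝ), Complex.exp (-z * t) * (t ^ (δ - 1) : ℝ))
      {z | 0 < z.re} := by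
  intro z₀ hz₀
  have hε : 0 < z₀.re / 2 := half_pos hz₀
  have hmeas : ∀ c : ℝ → ℝ, Measurable c → ∀ w : ℂ,
      AEStronglyMeasurable (fun t : ℝ => Complex.exp (-w * t) * c t) (volume.restrict (Ioi 0)) :=
    fun c hc w => (by fun_prop : Measurable _).aestronglyMeasurable
  have hderiv := hasDerivAt_integral_of_dominated_loc_of_deriv_le (μ := volume.restrict (Ioi 0))
    (F := fun w (t : ℝ) => Complex.exp (-w * t) * ((t ^ (δ - 1) : ℝ) : ℂ))
    (F' := fun w (t : ℝ) => Complex.exp (-w * t) * ((-t ^ δ : ℝ) : ℂ))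
    (bound := fun t => Real.exp (-(z₀.re / 2 * t)) * t ^ δ) (Metric.ball_mem_nhds z₀ hε)
    (Eventually.of_forall (hmeas _ (by fun_prop)))
    (integrableOn_cexp_neg_mul_of_abs_le_rpow hε (by linarith) (by linarith) (by fun_prop)
      fun t ht => (abs_of_nonneg (Real.rpow_nonneg (le_of_lt ht) _)).le)
    (hmeas _ (by fun_prop) z₀)
    (ae_restrict_of_forall_mem measurableSet_Ioi fun t ht w hw => ?_)
    (integrableOn_exp_neg_mul_mul_rpow hε (by linarith))
    (ae_restrict_of_forall_mem measurableSet_Ioi fun t ht w _ => ?_)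
  · exact hderiv.2.differentiableAt.differentiableWithinAt
  · have hre : z₀.re / 2 ≤ w.re := by
      have := (Complex.abs_re_le_norm (w - z₀)).trans_lt (mem_ball_iff_norm.mp hw)
      rw [Complex.sub_re] at this
      linarith [(abs_lt.mp this).1]
    rw [norm_cexp_neg_mul_mul_ofReal, abs_neg, abs_of_nonneg (Real.rpow_nonneg (le_of_lt ht) _)]
    exact mul_le_mul_of_nonneg_right (exp_neg_mul_le_of_le hre (le_of_lt ht))
      (Real.rpow_nonneg (le_of_lt ht) _)
  · have hpow : -(t : ℂ) * ((t ^ (δ - 1) : ℝ) : ℂ) = ((-t ^ δ : ℝ) : ℂ) := by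
      have ht' : (t : ℂ) ≠ 0 := Complex.ofReal_ne_zero.mpr (ne_of_gt ht)
      rw [Real.rpow_sub_one (ne_of_gt ht)]
      push_cast; field_simp
    have := (((hasDerivAt_id w).neg.mul_const (t : ℂ)).cexp).mul_const ((t ^ (δ - 1) : ℝ) : ℂ)
    rw [← hpow, ← mul_assoc]
    simpa using this

theorem integral_cexp_neg_mul_rpow {δ : ℝ} (hδ : 0 < δ) {z : ℂ} (hz : 0 < z.re) :
    ∫ t in Ioi (0 : ℝ), Complex.exp (-z * t) * (t ^ (δ - 1) : ℝ) =
      Complex.Gamma δ * z ^ (-(δ : ℂ)) := by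
  have hU : IsOpen {w : ℂ | 0 < w.re} := isOpen_lt continuous_const Complex.continuous_re
  have hreal : ∀ r : ℝ, 0 < r → ∫ t in Ioi (0 : ℝ), Complex.exp (-(r : ℂ) * t) * (t ^ (δ - 1) : ℝ) =
      Complex.Gamma δ * (r : ℂ) ^ (-(δ : ℂ)) := by
    intro r hr
    have harg : (r : ℂ).arg ≠ Real.pi := by
      rw [Complex.arg_ofReal_of_nonneg hr.le]; exact Real.pi_ne_zero.symm
    rw [Complex.cpow_neg, ← Complex.inv_cpow _ _ harg, ← one_div, mul_comm,
      ← Complex.integral_cpow_mul_exp_neg_mul_Ioi (by simpa using hδ) hr]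
    refine setIntegral_congr_fun measurableSet_Ioi fun t ht => ?_
    rw [Complex.ofReal_cpow (le_of_lt ht)]
    push_cast; ring_nf
  have hfreq : ∃ᶠ w in 𝓝[≠] (1 : ℂ), (∫ t in Ioi (0 : ℝ),
      Complex.exp (-w * t) * (t ^ (δ - 1) : ℝ)) = Complex.Gamma δ * w ^ (-(δ : ℂ)) := by
    have hlim : Tendsto (fun r : ℝ => (r : ℂ)) (𝓝[≠] 1) (𝓝[≠] 1) :=
      tendsto_nhdsWithin_of_tendsto_nhds_of_eventually_within _
        (Complex.continuous_ofReal.tendsto' 1 1 (by simp) |>.mono_left nhdsWithin_le_nhds)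
        (eventually_nhdsWithin_of_forall fun r hr => by simpa using hr)
    refine hlim.frequently (Eventually.frequently ?_)
    filter_upwards [(eventually_gt_nhds one_pos).filter_mono nhdsWithin_le_nhds] with r hr
    exact hreal r hr
  refine AnalyticOnNhd.eqOn_of_preconnected_of_frequently_eq
    ((differentiableOn_integral_cexp_neg_mul_rpow hδ).analyticOnNhd hU)
    (DifferentiableOn.analyticOnNhd (fun w hw => ((differentiableAt_id.cpow
      (differentiableAt_const _) (Or.inl hw)).const_mul _).differentiableWithinAt) hU)
    (convex_halfSpace_re_gt 0).isPreconnected (by simp : (1 : ℂ) ∈ {w : ℂ | 0 < w.re}) hfreq hz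

theorem betaIntegral_eq_integral_cexp_neg_mul (z : ℂ) (δ : ℝ) :
    Complex.betaIntegral z δ =
      ∫ u in Ioi (0 : ℝ), Complex.exp (-z * u) * ((1 - Real.exp (-u)) ^ (δ - 1) : ℝ) := by
  have himage : (fun u : ℝ => Real.exp (-u)) '' Ioi 0 = Ioo 0 1 := by
    ext y
    constructor
    · rintro ⟨u, hu, rfl⟩
      exact ⟨Real.exp_pos _, Real.exp_lt_one_iff.mpr (neg_lt_zero.mpr hu)⟩
    · rintro ⟨hy0, hy1⟩
      exact ⟨-Real.log y, neg_pos.mpr (Real.log_neg hy0 hy1), by simp [Real.exp_log hy0]⟩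
  have hderiv : ∀ u ∈ Ioi (0 : ℝ),
      HasDerivWithinAt (fun u : ℝ => Real.exp (-u)) (-Real.exp (-u)) (Ioi 0) u := fun u _ => by
    simpa using (hasDerivAt_neg u).exp.hasDerivWithinAt
  have hinj : InjOn (fun u : ℝ => Real.exp (-u)) (Ioi 0) :=
    (Real.exp_injective.comp neg_injective).injOn
  rw [Complex.betaIntegral, intervalIntegral.integral_of_le zero_le_one,
    integral_Ioc_eq_integral_Ioo, ← himage,
    integral_image_eq_integral_abs_deriv_smul measurableSet_Ioi hderiv hinj]
  refine setIntegral_congr_fun measurableSet_Ioi fun u hu => ?_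
  have hpos : 0 < Real.exp (-u) := Real.exp_pos _
  have hle : Real.exp (-u) ≤ 1 := Real.exp_le_one_iff.mpr (neg_nonpos.mpr (le_of_lt hu))
  have hpow : ((Real.exp (-u) : ℝ) : ℂ) ^ (z - 1) = Complex.exp ((z - 1) * -u) := by
    rw [Complex.cpow_def_of_ne_zero (Complex.ofReal_ne_zero.mpr hpos.ne'),
      ← Complex.ofReal_log hpos.le, Real.log_exp]
    push_cast; ring_nf
  have hpow' : (1 - ((Real.exp (-u) : ℝ) : ℂ)) ^ ((δ : ℂ) - 1) =
      (((1 - Real.exp (-u)) ^ (δ - 1) : ℝ) : ℂ) := by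
    rw [Complex.ofReal_cpow (by linarith)]
    push_cast; rfl
  rw [abs_neg, abs_of_pos hpos, Complex.real_smul, hpow, hpow', Complex.ofReal_exp, ← mul_assoc,
    ← Complex.exp_add]
  congr 2
  push_cast; ring

/-- `(1 - e^{-u})^{δ-1}` is the beta kernel in the variable `u = -log t`, and `u^{δ-1}` is its
leading term at `u = 0`. -/
noncomputable def kernelDiff (δ u : ℝ) : ℝ := (1 - Real.exp (-u)) ^ (δ - 1) - u ^ (δ - 1)

noncomputable def kernelDiffDeriv (δ u : ℝ) : ℝ :=
  (δ - 1) * (Real.exp (-u) * (1 - Real.exp (-u)) ^ (δ - 2) - u ^ (δ - 2))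

section kernelDiff

variable {δ u : ℝ}

lemma one_sub_exp_neg_pos (hu : 0 < u) : 0 < 1 - Real.exp (-u) := by
  linarith [Real.exp_lt_one_iff.mpr (neg_lt_zero.mpr hu)]

lemma one_sub_exp_neg_le (u : ℝ) : 1 - Real.exp (-u) ≤ u := by
  linarith [Real.add_one_le_exp (-u)]

lemma exp_neg_le_inv_one_add (hu : 0 ≤ u) : Real.exp (-u) ≤ (1 + u)⁻¹ := by
  rw [Real.exp_neg]
  exact inv_anti₀ (by linarith) (by linarith [Real.add_one_le_exp u])

lemma one_sub_exp_neg_rpow_le {p : ℝ} (hp : p ≤ 0) (hu : 0 < u) :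
    (1 - Real.exp (-u)) ^ p ≤ u ^ p * (1 + u) ^ (-p) := by
  have hlow : u / (1 + u) ≤ 1 - Real.exp (-u) := by
    have := exp_neg_le_inv_one_add hu.le
    rw [div_eq_mul_inv, show u * (1 + u)⁻¹ = 1 - (1 + u)⁻¹ by field_simp; ring]
    linarith
  calc (1 - Real.exp (-u)) ^ p ≤ (u / (1 + u)) ^ p :=
        Real.rpow_le_rpow_of_nonpos (by positivity) hlow hp
    _ = u ^ p * (1 + u) ^ (-p) := by
        rw [Real.div_rpow hu.le (by positivity), Real.rpow_neg (by positivity), div_eq_mul_inv]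

lemma one_add_rpow_one_sub_le (hδ : 0 < δ) (hu : 0 ≤ u) : (1 + u) ^ (1 - δ) ≤ 1 + u := by
  simpa using Real.rpow_le_rpow_of_exponent_le (by linarith : 1 ≤ 1 + u) (by linarith : 1 - δ ≤ 1)

lemma abs_kernelDiff_le (hδ0 : 0 < δ) (hδ1 : δ < 1) (hu : 0 < u) : |kernelDiff δ u| ≤ u ^ δ := by
  have hc := one_sub_exp_neg_pos hu
  have hnonneg : 0 ≤ kernelDiff δ u := sub_nonneg.mpr
    (Real.rpow_le_rpow_of_nonpos hc (one_sub_exp_neg_le u) (by linarith))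
  have hupper : (1 - Real.exp (-u)) ^ (δ - 1) ≤ u ^ (δ - 1) + u ^ δ :=
    calc (1 - Real.exp (-u)) ^ (δ - 1) ≤ u ^ (δ - 1) * (1 + u) ^ (1 - δ) := by
          simpa using one_sub_exp_neg_rpow_le (by linarith : δ - 1 ≤ 0) hu
      _ ≤ u ^ (δ - 1) * (1 + u) :=
          mul_le_mul_of_nonneg_left (one_add_rpow_one_sub_le hδ0 hu.le) (by positivity)
      _ = u ^ (δ - 1) + u ^ δ := by
          rw [mul_add, mul_one, ← Real.rpow_add_one hu.ne', sub_add_cancel]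
  rw [abs_of_nonneg hnonneg, kernelDiff]
  linarith

lemma hasDerivAt_kernelDiff (hu : 0 < u) : HasDerivAt (kernelDiff δ) (kernelDiffDeriv δ u) u := by
  have hc := one_sub_exp_neg_pos hu
  have h := (((hasDerivAt_neg u).exp.const_sub 1).rpow_const (p := δ - 1) (Or.inl hc.ne')).sub
    (Real.hasDerivAt_rpow_const (p := δ - 1) (Or.inl hu.ne'))
  refine h.congr_deriv ?_
  rw [kernelDiffDeriv, show δ - 1 - 1 = δ - 2 by ring]
  ring

lemma abs_kernelDiffDeriv_le (hδ0 : 0 < δ) (hδ1 : δ < 1) (hu : 0 < u) :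
    |kernelDiffDeriv δ u| ≤ u ^ (δ - 1) := by
  set c := 1 - Real.exp (-u) with hc_def
  have hc := one_sub_exp_neg_pos hu
  have hstep : u ^ (δ - 1) = u ^ (δ - 2) * u := by
    rw [← Real.rpow_add_one hu.ne']; ring_nf
  have hupper : Real.exp (-u) * c ^ (δ - 2) ≤ u ^ (δ - 2) + u ^ (δ - 1) :=
    calc Real.exp (-u) * c ^ (δ - 2) ≤ (1 + u)⁻¹ * (u ^ (δ - 2) * (1 + u) ^ (-(δ - 2))) :=
          mul_le_mul (exp_neg_le_inv_one_add hu.le)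
            (one_sub_exp_neg_rpow_le (by linarith) hu) (by positivity) (by positivity)
      _ = u ^ (δ - 2) * (1 + u) ^ (1 - δ) := by
          rw [← Real.rpow_neg_one, mul_left_comm, ← Real.rpow_add (by positivity)]
          ring_nf
      _ ≤ u ^ (δ - 2) * (1 + u) :=
          mul_le_mul_of_nonneg_left (one_add_rpow_one_sub_le hδ0 hu.le) (by positivity)
      _ = u ^ (δ - 2) + u ^ (δ - 1) := by rw [hstep]; ring
  have hlower : u ^ (δ - 2) - u ^ (δ - 1) ≤ Real.exp (-u) * c ^ (δ - 2) :=
    calc u ^ (δ - 2) - u ^ (δ - 1) = (1 - u) * u ^ (δ - 2) := by rw [hstep]; ring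
      _ ≤ Real.exp (-u) * u ^ (δ - 2) :=
          mul_le_mul_of_nonneg_right (by linarith [Real.add_one_le_exp (-u)]) (by positivity)
      _ ≤ Real.exp (-u) * c ^ (δ - 2) :=
          mul_le_mul_of_nonneg_left
            (Real.rpow_le_rpow_of_nonpos hc (one_sub_exp_neg_le u) (by linarith)) (by positivity)
  rw [kernelDiffDeriv, ← hc_def, abs_mul]
  exact (mul_le_of_le_one_left (abs_nonneg _) (abs_le.mpr ⟨by linarith, by linarith⟩)).trans
    (abs_le.mpr ⟨by linarith, by linarith⟩)

end kernelDiff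

lemma measurable_kernelDiff (δ : ℝ) : Measurable (kernelDiff δ) := by
  unfold kernelDiff; fun_prop

lemma measurable_kernelDiffDeriv (δ : ℝ) : Measurable (kernelDiffDeriv δ) := by
  unfold kernelDiffDeriv; fun_prop

lemma tendsto_cexp_neg_mul_kernelDiff {δ : ℝ} (hδ0 : 0 < δ) (hδ1 : δ < 1) {z : ℂ}
    {l : Filter ℝ} (hl : ∀ᶠ t in l, 0 < t)
    (hlim : Tendsto (fun t : ℝ => Real.exp (-(z.re * t)) * t ^ δ) l (𝓝 0)) :
    Tendsto (fun t : ℝ => Complex.exp (-z * t) * kernelDiff δ t) l (𝓝 0) := by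
  refine squeeze_zero_norm' ?_ hlim
  filter_upwards [hl] with t ht
  rw [norm_cexp_neg_mul_mul_ofReal]
  exact mul_le_mul_of_nonneg_left (abs_kernelDiff_le hδ0 hδ1 ht) (Real.exp_pos _).le

lemma integral_cexp_neg_mul_kernelDiff {δ : ℝ} (hδ0 : 0 < δ) (hδ1 : δ < 1) {z : ℂ}
    (hz : 0 < z.re) :
    ∫ t in Ioi (0 : ℝ), Complex.exp (-z * t) * kernelDiff δ t =
      z⁻¹ * ∫ t in Ioi (0 : ℝ), Complex.exp (-z * t) * kernelDiffDeriv δ t := by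
  have hz0 : z ≠ 0 := fun h => by simp [h] at hz
  have hint : IntegrableOn (fun t : ℝ => Complex.exp (-z * t) * kernelDiff δ t) (Ioi 0) :=
    integrableOn_cexp_neg_mul_of_abs_le_rpow hz le_rfl (by linarith) (measurable_kernelDiff δ)
      fun t ht => abs_kernelDiff_le hδ0 hδ1 ht
  have hint' : IntegrableOn (fun t : ℝ => -z⁻¹ * (Complex.exp (-z * t) * kernelDiffDeriv δ t))
      (Ioi 0) :=
    (integrableOn_cexp_neg_mul_of_abs_le_rpow hz le_rfl (by linarith)
      (measurable_kernelDiffDeriv δ) fun t ht => abs_kernelDiffDeriv_le hδ0 hδ1 ht).const_mul _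
  have hprimitive (t : ℝ) : HasDerivAt (fun t : ℝ => -Complex.exp (-z * t) / z)
      (Complex.exp (-z * t)) t :=
    (((hasDerivAt_id t).ofReal_comp.const_mul (-z)).cexp.neg.div_const z).congr_deriv
      (by simp; field_simp)
  have hprod : ((fun t : ℝ => -Complex.exp (-z * t) / z) * fun t : ℝ => (kernelDiff δ t : ℂ)) =
      fun t : ℝ => -z⁻¹ * (Complex.exp (-z * t) * kernelDiff δ t) := by
    ext t; simp only [Pi.mul_apply]; ring
  have hzero : Tendsto (fun t : ℝ => Complex.exp (-z * t) * kernelDiff δ t) (𝓝[>] 0) (𝓝 0) := by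
    refine tendsto_cexp_neg_mul_kernelDiff hδ0 hδ1 self_mem_nhdsWithin ?_
    have := ((by fun_prop : Continuous fun t : ℝ => Real.exp (-(z.re * t))).mul
      (Real.continuous_rpow_const hδ0.le)).tendsto' 0 0 (by simp [Real.zero_rpow hδ0.ne'])
    exact this.mono_left nhdsWithin_le_nhds
  have hinfty : Tendsto (fun t : ℝ => Complex.exp (-z * t) * kernelDiff δ t) atTop (𝓝 0) := by
    refine tendsto_cexp_neg_mul_kernelDiff hδ0 hδ1 (eventually_gt_atTop 0) ?_
    simpa [mul_comm] using tendsto_rpow_mul_exp_neg_mul_atTop_nhds_zero δ z.re hz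
  have hibp := integral_Ioi_mul_deriv_eq_deriv_mul (a := 0) (a' := 0) (b' := 0)
    (v := fun t : ℝ => (kernelDiff δ t : ℂ)) (v' := fun t : ℝ => (kernelDiffDeriv δ t : ℂ))
    (fun t _ => hprimitive t) (fun t ht => (hasDerivAt_kernelDiff ht).ofReal_comp)
    (hint'.congr_fun (fun t _ => by simp only [Pi.mul_apply]; ring) measurableSet_Ioi) hint
    (by rw [hprod]; simpa using hzero.const_mul (-z⁻¹))
    (by rw [hprod]; simpa using hinfty.const_mul (-z⁻¹))
  have hconst : ∫ t in Ioi (0 : ℝ), -Complex.exp (-z * t) / z * kernelDiffDeriv δ t =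
      -z⁻¹ * ∫ t in Ioi (0 : ℝ), Complex.exp (-z * t) * kernelDiffDeriv δ t := by
    rw [← integral_const_mul]
    congr 1; ext t; ring
  rw [hconst] at hibp
  linear_combination hibp

theorem norm_betaIntegral_sub_Gamma_mul_cpow_le {δ : ℝ} (hδ0 : 0 < δ) (hδ1 : δ < 1) {z : ℂ}
    (hz : 1 ≤ z.re) :
    ‖Complex.betaIntegral z δ - Complex.Gamma δ * z ^ (-(δ : ℂ))‖ ≤ Real.Gamma δ / ‖z‖ := by
  have hz0 : 0 < z.re := by linarith
  have hsplit : Complex.betaIntegral z δ - Complex.Gamma δ * z ^ (-(δ : ℂ)) =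
      ∫ t in Ioi (0 : ℝ), Complex.exp (-z * t) * kernelDiff δ t := by
    rw [sub_eq_iff_eq_add, betaIntegral_eq_integral_cexp_neg_mul,
      ← integral_cexp_neg_mul_rpow hδ0 hz0, ← integral_add
        (integrableOn_cexp_neg_mul_of_abs_le_rpow hz0 le_rfl (by linarith)
          (measurable_kernelDiff δ) fun t ht => abs_kernelDiff_le hδ0 hδ1 ht)
        (integrableOn_cexp_neg_mul_of_abs_le_rpow hz0 le_rfl (by linarith) (by fun_prop)
          fun t ht => (abs_of_nonneg (Real.rpow_nonneg (le_of_lt ht) _)).le)]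
    refine setIntegral_congr_fun measurableSet_Ioi fun t _ => ?_
    simp only [kernelDiff]
    push_cast; ring
  have hbound :
      ‖∫ t in Ioi (0 : ℝ), Complex.exp (-z * t) * kernelDiffDeriv δ t‖ ≤ Real.Gamma δ := by
    rw [Real.Gamma_eq_integral hδ0]
    refine norm_integral_le_of_norm_le (Real.GammaIntegral_convergent hδ0)
      (ae_restrict_of_forall_mem measurableSet_Ioi fun t ht => ?_)
    rw [norm_cexp_neg_mul_mul_ofReal]
    simpa using mul_le_mul (exp_neg_mul_le_of_le hz (le_of_lt ht))
      (abs_kernelDiffDeriv_le hδ0 hδ1 ht) (abs_nonneg _) (Real.exp_pos _).le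
  rw [hsplit, integral_cexp_neg_mul_kernelDiff hδ0 hδ1 hz0, norm_mul, norm_inv, div_eq_inv_mul]
  gcongr

lemma Asymptotics.IsTheta.comp_tendsto {α β E F : Type*} [Norm E] [Norm F] {f : α → E}
    {g : α → F} {l : Filter α} (h : f =Θ[l] g) {k : β → α} {l' : Filter β} (hk : Tendsto k l' l) :
    (f ∘ k) =Θ[l'] (g ∘ k) :=
  ⟨h.1.comp_tendsto hk, h.2.comp_tendsto hk⟩

lemma Asymptotics.IsTheta.exists_bounds_of_cobounded_inf_principal {E F G : Type*}
    [NormedAddCommGroup E] [SeminormedAddCommGroup F] [SeminormedAddCommGroup G] {f : E → F}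
    {g : E → G} {s : Set E} (h : f =Θ[cobounded E ⊓ 𝓟 s] g) :
    ∃ r C₁ C₂ : ℝ, 0 < r ∧ 0 < C₁ ∧ 0 < C₂ ∧
      ∀ x ∈ s, r ≤ ‖x‖ → C₁ * ‖g x‖ ≤ ‖f x‖ ∧ ‖f x‖ ≤ C₂ * ‖g x‖ := by
  obtain ⟨C₂, hC₂, hupper⟩ := h.1.exists_pos
  obtain ⟨C, hC, hlower⟩ := h.2.exists_pos
  have hev := hupper.bound.and hlower.bound
  rw [eventually_inf_principal, ← comap_norm_atTop, eventually_comap, eventually_atTop] at hev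
  obtain ⟨r, hr⟩ := hev
  refine ⟨max r 1, C⁻¹, C₂, by positivity, inv_pos.mpr hC, hC₂, fun x hx hrx => ?_⟩
  obtain ⟨hf, hg⟩ := hr ‖x‖ (le_of_max_le_left hrx) x rfl hx
  exact ⟨(inv_mul_le_iff₀ hC).mpr hg, hf⟩

lemma isLittleO_rpow_rpow_atTop {a b : ℝ} (hab : a < b) :
    (fun x : ℝ => x ^ a) =o[atTop] fun x => x ^ b := by
  refine (isLittleO_iff_tendsto' ?_).mpr ?_
  · filter_upwards [eventually_gt_atTop 0] with x hx h
    exact absurd h (Real.rpow_pos_of_pos hx b).ne'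
  · refine (tendsto_rpow_neg_atTop (sub_pos.mpr hab)).congr' ?_
    filter_upwards [eventually_gt_atTop 0] with x hx
    rw [← Real.rpow_sub hx]; ring_nf

lemma tendsto_div_add_const_cobounded (c : ℂ) :
    Tendsto (fun z : ℂ => z / (z + c)) (cobounded ℂ) (𝓝 1) := by
  have h : Tendsto (fun z : ℂ => 1 - c * (z + c)⁻¹) (cobounded ℂ) (𝓝 1) := by
    simpa using
      ((tendsto_inv₀_cobounded.comp (tendsto_add_const_cobounded c)).const_mul c).const_sub 1
  refine h.congr' ?_
  filter_upwards [(tendsto_add_const_cobounded c).eventually_ne_cobounded 0] with z hz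
  field_simp
  ring

lemma isTheta_norm_add_const_rpow (c : ℂ) (δ : ℝ) :
    (fun z : ℂ => ‖z + c‖ ^ δ) =Θ[cobounded ℂ] fun z => ‖z‖ ^ δ :=
  ((isTheta_of_div_tendsto_nhds_ne_zero (tendsto_div_add_const_cobounded c)
    one_ne_zero).norm_left.norm_right).rpow (Eventually.of_forall fun _ => norm_nonneg _)
    (Eventually.of_forall fun _ => norm_nonneg _)

lemma tendsto_add_const_cobounded_inf_re (c L : ℝ) :
    Tendsto (fun z : ℂ => z + c) (cobounded ℂ ⊓ 𝓟 {z | L ≤ z.re})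
      (cobounded ℂ ⊓ 𝓟 {z | L + c ≤ z.re}) :=
  tendsto_inf.mpr ⟨(tendsto_add_const_cobounded _).mono_left inf_le_left,
    tendsto_principal.mpr (mem_inf_of_right fun z (hz : L ≤ z.re) => by
      simp only [mem_ofPred_eq, Complex.add_re, Complex.ofReal_re]; linarith)⟩

lemma isTheta_betaIntegral {δ : ℝ} (hδ0 : 0 < δ) (hδ1 : δ < 1) :
    (fun z : ℂ => Complex.betaIntegral z δ) =Θ[cobounded ℂ ⊓ 𝓟 {z | 1 ≤ z.re}]
      fun z => ‖z‖ ^ (-δ) := by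
  have hmain : (fun z : ℂ => Complex.Gamma δ * z ^ (-(δ : ℂ))) =Θ[cobounded ℂ ⊓ 𝓟 {z | 1 ≤ z.re}]
      fun z => ‖z‖ ^ (-δ) := by
    refine IsTheta.const_mul_left (Complex.Gamma_ne_zero_of_re_pos (by simpa using hδ0))
      (IsTheta.of_norm_eventuallyEq (Eventually.of_forall fun z => ?_))
    simpa using Complex.norm_cpow_real z (-δ)
  have herr : (fun z : ℂ => Complex.betaIntegral z δ - Complex.Gamma δ * z ^ (-(δ : ℂ)))
      =O[cobounded ℂ ⊓ 𝓟 {z | 1 ≤ z.re}] fun z => ‖z‖ ^ (-1 : ℝ) := by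
    refine IsBigO.of_bound (Real.Gamma δ) (mem_inf_of_right fun z (hz : 1 ≤ z.re) => ?_)
    simp only [mem_ofPred_eq]
    rw [Real.rpow_neg_one, Real.norm_eq_abs, abs_of_nonneg (by positivity), ← div_eq_mul_inv]
    exact norm_betaIntegral_sub_Gamma_mul_cpow_le hδ0 hδ1 hz
  have hsmall : (fun z : ℂ => ‖z‖ ^ (-1 : ℝ)) =o[cobounded ℂ ⊓ 𝓟 {z | 1 ≤ z.re}]
      fun z => ‖z‖ ^ (-δ) :=
    ((isLittleO_rpow_rpow_atTop (by linarith)).comp_tendsto tendsto_norm_cobounded_atTop).mono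
      inf_le_left
  have hequiv : (fun z : ℂ => Complex.betaIntegral z δ) ~[cobounded ℂ ⊓ 𝓟 {z | 1 ≤ z.re}]
      fun z => Complex.Gamma δ * z ^ (-(δ : ℂ)) :=
    herr.trans_isLittleO (hsmall.trans_isTheta hmain.symm)
  exact hequiv.isTheta.trans hmain

lemma isTheta_Gamma_add_div_Gamma_of_one_le {δ : ℝ} (hδ0 : 0 < δ) (hδ1 : δ < 1) :
    (fun z : ℂ => Complex.Gamma (z + δ) / Complex.Gamma z) =Θ[cobounded ℂ ⊓ 𝓟 {z | 1 ≤ z.re}]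
      fun z => ‖z‖ ^ δ := by
  have hΓδ : Complex.Gamma δ ≠ 0 := Complex.Gamma_ne_zero_of_re_pos (by simpa using hδ0)
  have heq : (fun z : ℂ => Complex.Gamma δ * (Complex.betaIntegral z δ)⁻¹)
      =ᶠ[cobounded ℂ ⊓ 𝓟 {z | 1 ≤ z.re}] fun z => Complex.Gamma (z + δ) / Complex.Gamma z := by
    refine mem_inf_of_right fun z (hz : 1 ≤ z.re) => ?_
    have hz0 : 0 < z.re := by linarith
    change Complex.Gamma δ * (Complex.betaIntegral z δ)⁻¹ = Complex.Gamma (z + δ) / Complex.Gamma z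
    rw [Complex.betaIntegral_eq_Gamma_mul_div _ _ hz0 (by simpa using hδ0)]
    field_simp [Complex.Gamma_ne_zero_of_re_pos hz0]
  refine heq.symm.trans_isTheta ((isTheta_betaIntegral hδ0 hδ1).inv.const_mul_left hΓδ
    |>.trans_eventuallyEq (Eventually.of_forall fun z => ?_))
  simp [Real.rpow_neg (norm_nonneg z)]

lemma Gamma_add_div_Gamma_eq_mul_div {δ : ℝ} {z : ℂ} (hz : z ≠ 0) (hzδ : z + δ ≠ 0) :
    Complex.Gamma (z + δ) / Complex.Gamma z =
      Complex.Gamma (z + 1 + δ) / Complex.Gamma (z + 1) * (z / (z + δ)) := by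
  rw [Complex.Gamma_add_one z hz, add_right_comm, Complex.Gamma_add_one _ hzδ]
  field_simp

lemma isTheta_Gamma_add_div_Gamma_of_add_one_le {δ L : ℝ}
    (h : (fun z : ℂ => Complex.Gamma (z + δ) / Complex.Gamma z)
      =Θ[cobounded ℂ ⊓ 𝓟 {z | L + 1 ≤ z.re}] fun z => ‖z‖ ^ δ) :
    (fun z : ℂ => Complex.Gamma (z + δ) / Complex.Gamma z)
      =Θ[cobounded ℂ ⊓ 𝓟 {z | L ≤ z.re}] fun z => ‖z‖ ^ δ := by
  have hshift := (h.comp_tendsto (by simpa using tendsto_add_const_cobounded_inf_re 1 L)).trans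
    ((isTheta_norm_add_const_rpow 1 δ).mono inf_le_left)
  have hfactor : (fun z : ℂ => z / (z + δ)) =Θ[cobounded ℂ ⊓ 𝓟 {z | L ≤ z.re}]
      fun _ => (1 : ℝ) :=
    ((isTheta_of_div_tendsto_nhds_ne_zero (by simpa using tendsto_div_add_const_cobounded δ)
      one_ne_zero).symm.trans (isTheta_const_const one_ne_zero one_ne_zero)).mono inf_le_left
  have heq : (fun z : ℂ => Complex.Gamma (z + δ) / Complex.Gamma z)
      =ᶠ[cobounded ℂ ⊓ 𝓟 {z | L ≤ z.re}]
      fun z => Complex.Gamma (z + 1 + δ) / Complex.Gamma (z + 1) * (z / (z + δ)) := by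
    refine Eventually.filter_mono inf_le_left ?_
    filter_upwards [eventually_ne_cobounded (0 : ℂ),
      (tendsto_add_const_cobounded (δ : ℂ)).eventually_ne_cobounded 0] with z hz hzδ
    exact Gamma_add_div_Gamma_eq_mul_div hz hzδ
  simpa using heq.trans_isTheta (hshift.mul hfactor)

theorem isTheta_Gamma_add_div_Gamma {δ : ℝ} (hδ0 : 0 < δ) (hδ1 : δ < 1) (L : ℝ) :
    (fun z : ℂ => Complex.Gamma (z + δ) / Complex.Gamma z) =Θ[cobounded ℂ ⊓ 𝓟 {z | L ≤ z.re}]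
      fun z => ‖z‖ ^ δ := by
  have hnat (n : ℕ) : (fun z : ℂ => Complex.Gamma (z + δ) / Complex.Gamma z)
      =Θ[cobounded ℂ ⊓ 𝓟 {z | 1 - n ≤ z.re}] fun z => ‖z‖ ^ δ := by
    induction n with
    | zero => simpa using isTheta_Gamma_add_div_Gamma_of_one_le hδ0 hδ1
    | succ n ih =>
      have hL : (1 : ℝ) - (n + 1 : ℕ) + 1 = 1 - n := by push_cast; ring
      exact isTheta_Gamma_add_div_Gamma_of_add_one_le (by rwa [hL])
  refine (hnat ⌈1 - L⌉₊).mono (inf_le_inf_left _ (principal_mono.mpr fun z (hz : L ≤ z.re) => ?_))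
  change (1 : ℝ) - ⌈1 - L⌉₊ ≤ z.re
  linarith [Nat.le_ceil (1 - L)]

lemma isTheta_Gamma_add_div_Gamma_comp_add_const {δ : ℝ} (hδ0 : 0 < δ) (hδ1 : δ < 1) (c : ℝ) :
    (fun w : ℂ => Complex.Gamma (w + c + δ) / Complex.Gamma (w + c))
      =Θ[cobounded ℂ ⊓ 𝓟 {w | 0 ≤ w.re}] fun w => ‖w‖ ^ δ :=
  ((isTheta_Gamma_add_div_Gamma hδ0 hδ1 c).comp_tendsto
    (by simpa using tendsto_add_const_cobounded_inf_re c 0)).trans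
    ((isTheta_norm_add_const_rpow c δ).mono inf_le_left)

/-- Stirling asymptotics: for `0 < α - β < 1` and `z = iR + ζ` with `R²+ζ²`
sufficiently large,
`|Γ(1-β+R-iζ)Γ(α+R-iζ)/(Γ(1-α+R-iζ)Γ(β+R-iζ))| ≍ (R²+ζ²)^{α-β}`
up to constants depending only on `α, β`. -/
theorem stmt17 (α β : ℝ) (h1 : 0 < α - β) (h2 : α - β < 1) :
    ∃ R₀ C₁ C₂ : ℝ, 0 < R₀ ∧ 0 < C₁ ∧ 0 < C₂ ∧
      ∀ R ζ : ℝ, 0 ≤ R → R₀ ^ 2 ≤ R ^ 2 + ζ ^ 2 →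
        C₁ * (R ^ 2 + ζ ^ 2) ^ (α - β) ≤ ‖gammaRatio17 α β R ζ‖ ∧
          ‖gammaRatio17 α β R ζ‖ ≤ C₂ * (R ^ 2 + ζ ^ 2) ^ (α - β) := by
  have hΘ := (isTheta_Gamma_add_div_Gamma_comp_add_const h1 h2 β).mul
    (isTheta_Gamma_add_div_Gamma_comp_add_const h1 h2 (1 - α))
  obtain ⟨R₀, C₁, C₂, hR₀, hC₁, hC₂, hbounds⟩ := hΘ.exists_bounds_of_cobounded_inf_principal
  refine ⟨R₀, C₁, C₂, hR₀, hC₁, hC₂, fun R ζ hR hRζ => ?_⟩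
  set w : ℂ := R - ζ * Complex.I
  have hnorm : ‖w‖ ^ 2 = R ^ 2 + ζ ^ 2 := by
    rw [Complex.sq_norm, Complex.normSq_apply]; simp [w]; ring
  have hratio : gammaRatio17 α β R ζ =
      Complex.Gamma (w + β + (α - β : ℝ)) / Complex.Gamma (w + β) *
        (Complex.Gamma (w + (1 - α : ℝ) + (α - β : ℝ)) / Complex.Gamma (w + (1 - α : ℝ))) := by
    rw [gammaRatio17, mul_div_mul_comm, mul_comm]
    congr 3 <;> push_cast <;> ring
  have hpow : (R ^ 2 + ζ ^ 2) ^ (α - β) = ‖‖w‖ ^ (α - β) * ‖w‖ ^ (α - β)‖ := by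
    rw [Real.norm_eq_abs, abs_of_nonneg (by positivity), ← Real.mul_rpow (norm_nonneg _)
      (norm_nonneg _), ← sq, hnorm]
  rw [hratio, hpow]
  exact hbounds w (by simpa [w] using hR)
    ((pow_le_pow_iff_left₀ hR₀.le (norm_nonneg w) two_ne_zero).mp (hnorm ▸ hRζ))
end

section
/- For Q₀ = -(N-2γ)/2 + 2γ/(p-1), the hypergeometric expression ρ*(ρ) = [α⁻¹ (4ρ/(4+ρ²))^{(N-2γ)/2} ₂F₁(γ/(p-1), (N-2γ)/2 - γ/(p-1); N/2; ((4-ρ²)/(4+ρ²))²)]^{2/(N-2γ)} is strictly increasing in ρ ∈ (0,2), where α = Γ(N/2)Γ(γ)/(Γ(γ + γ/(p-1))Γ(N/2 - γ/(p-1))). Equivalently, the function f(η) = (1-η)^{(N-2γ)/4} ₂F₁(γ/(p-1), (N-2γ)/2 - γ/(p-1); N/2; η) is strictly decreasing for η ∈ (0,1). -/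
/-!
Write `₂F₁(a,b;c;x) = ∑ cₙ xⁿ` with `cₙ > 0`. The derivative of `(1-x)^β ₂F₁` is `(1-x)^(β-1)`
times the power series with coefficients `(n+1)c_{n+1} - (n+β)cₙ = cₙ((a+n)(b+n)/(c+n) - (n+β))`.
When `a + b ≤ 2β` and `β < c`, AM-GM makes all of them negative. Here `a + b = (N-2γ)/2 = 2β`
and `β = (N-2γ)/4 < N/2 = c`, while `a, b > 0` is exactly `N/(N-2γ) < p`.

For `ρ*`: `η = ((4-ρ²)/(4+ρ²))²` decreases from `1` to `0` on `(0,2)` and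
`(4ρ/(4+ρ²))^((N-2γ)/2) = (1-η)^β`, so `ρ*` is an increasing function of `(1-η)^β ₂F₁(η)`.
-/

open Filter Topology Set

/-- The Gauss hypergeometric function `₂F₁(a,b;c;x)` defined by its power
series `Σ_n (a)_n (b)_n / (c)_n · x^n/n!`, written via Gamma functions. -/
noncomputable def hyperg (a b c x : ℝ) : ℝ :=
  ∑' n : ℕ,
    Real.Gamma (a + n) * Real.Gamma (b + n) * Real.Gamma c /
      (Real.Gamma a * Real.Gamma b * Real.Gamma (c + n)) * x ^ n / (n.factorial : ℝ)

section PowerSeries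

variable {s : ℕ → ℝ}

lemma summable_coeff_mul_pow (hs : ∀ n, s n ≠ 0)
    (hratio : Tendsto (fun n => s (n + 1) / s n) atTop (𝓝 1)) {r : ℝ} (hr : |r| < 1) :
    Summable (fun n => s n * r ^ n) := by
  rcases eq_or_ne r 0 with rfl | hr0
  · exact (summable_nat_add_iff 1).1 (by simp)
  refine summable_of_ratio_test_tendsto_lt_one hr
    (Eventually.of_forall fun n => mul_ne_zero (hs n) (pow_ne_zero n hr0)) ?_
  have hnorm : ∀ n, ‖s (n + 1) * r ^ (n + 1)‖ / ‖s n * r ^ n‖ = |s (n + 1) / s n| * |r| := by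
    intro n
    rw [← norm_div, Real.norm_eq_abs, ← abs_mul]
    congr 1
    field_simp [hs n, pow_ne_zero n hr0]
    ring
  have hlim := hratio.abs.mul_const |r|
  rw [abs_one, one_mul] at hlim
  exact hlim.congr fun n => (hnorm n).symm

lemma summable_succ_mul_coeff_mul_pow (hs : ∀ n, s n ≠ 0)
    (hratio : Tendsto (fun n => s (n + 1) / s n) atTop (𝓝 1)) {r : ℝ} (hr : |r| < 1) :
    Summable (fun n : ℕ => (n + 1 : ℝ) * s (n + 1) * r ^ n) := by
  refine summable_coeff_mul_pow (s := fun n : ℕ => (n + 1 : ℝ) * s (n + 1))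
    (fun n => mul_ne_zero (by positivity) (hs _)) ?_ hr
  have hlin : Tendsto (fun n : ℕ => (2 + 1 * (n : ℝ)) / (1 + 1 * n)) atTop (𝓝 (1 / 1)) :=
    tendsto_add_mul_div_add_mul_atTop_nhds 2 1 1 one_ne_zero
  rw [show (𝓝 (1 : ℝ)) = 𝓝 (1 / 1 * 1) by norm_num]
  refine (hlin.mul (hratio.comp (tendsto_add_atTop_nat 1))).congr fun n => ?_
  have : (n + 1 : ℝ) ≠ 0 := by positivity
  simp only [Function.comp_apply]
  push_cast
  field_simp [hs (n + 1)]
  ring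

lemma hasDerivAt_tsum_coeff_mul_pow (hs : ∀ n, s n ≠ 0)
    (hratio : Tendsto (fun n => s (n + 1) / s n) atTop (𝓝 1)) {x : ℝ} (hx : |x| < 1) :
    HasDerivAt (fun y => ∑' n, s n * y ^ n) (∑' n : ℕ, (n + 1 : ℝ) * s (n + 1) * x ^ n) x := by
  obtain ⟨r, hxr, hr1⟩ := exists_between hx
  have hr0 : 0 < r := (abs_nonneg x).trans_lt hxr
  have hr : |r| < 1 := by rwa [abs_of_pos hr0]
  set u : ℕ → ℝ := fun n => |s n| * (n * r ^ (n - 1))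
  have hu : Summable u := by
    refine (summable_nat_add_iff 1).1 ((summable_succ_mul_coeff_mul_pow hs hratio hr).abs.congr
      fun n => ?_)
    simp only [u, abs_mul, abs_pow, abs_of_pos hr0, Nat.add_sub_cancel]
    push_cast
    rw [abs_of_pos (by positivity)]
    ring
  have hbound : ∀ n, ∀ y ∈ Ioo (-r) r, ‖s n * (n * y ^ (n - 1))‖ ≤ u n := by
    intro n y hy
    have : |y| ≤ r := abs_le.2 ⟨hy.1.le, hy.2.le⟩
    simp only [u, norm_mul, Real.norm_eq_abs, Nat.abs_cast, abs_pow]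
    gcongr
  have hmem : x ∈ Ioo (-r) r := abs_lt.1 hxr
  have hderiv := hasDerivAt_tsum_of_isPreconnected hu isOpen_Ioo (convex_Ioo _ _).isPreconnected
    (fun n y _ => (hasDerivAt_pow n y).const_mul (s n)) hbound
    (show (0 : ℝ) ∈ Ioo (-r) r by constructor <;> linarith [abs_nonneg x])
    ((summable_nat_add_iff 1).1 (by simp)) hmem
  refine hderiv.congr_deriv ?_
  rw [(Summable.of_norm_bounded hu fun n => hbound n x hmem).tsum_eq_zero_add]
  simp only [Nat.cast_zero, zero_mul, mul_zero, zero_add, Nat.add_sub_cancel]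
  exact tsum_congr fun n => by push_cast; ring

lemma hasSum_one_sub_mul_sub_mul (hs : ∀ n, s n ≠ 0)
    (hratio : Tendsto (fun n => s (n + 1) / s n) atTop (𝓝 1)) {x : ℝ} (hx : |x| < 1) (β : ℝ) :
    HasSum (fun n : ℕ => ((n + 1 : ℝ) * s (n + 1) - (n + β) * s n) * x ^ n)
      ((1 - x) * ∑' n : ℕ, (n + 1 : ℝ) * s (n + 1) * x ^ n - β * ∑' n, s n * x ^ n) := by
  have hD := (summable_succ_mul_coeff_mul_pow hs hratio hx).hasSum
  have hF := (summable_coeff_mul_pow hs hratio hx).hasSum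
  have hB : HasSum (fun n : ℕ => n * s n * x ^ n)
      (x * ∑' n : ℕ, (n + 1 : ℝ) * s (n + 1) * x ^ n) := by
    refine (hasSum_nat_add_iff' 1).1 ?_
    simpa [pow_succ, mul_comm, mul_left_comm, mul_assoc] using hD.mul_left x
  rw [show (1 - x) * ∑' n : ℕ, (n + 1 : ℝ) * s (n + 1) * x ^ n - β * ∑' n, s n * x ^ n =
      ∑' n : ℕ, (n + 1 : ℝ) * s (n + 1) * x ^ n - x * ∑' n : ℕ, (n + 1 : ℝ) * s (n + 1) * x ^ n
        - β * ∑' n, s n * x ^ n by ring]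
  exact ((hD.sub hB).sub (hF.mul_left β)).congr_fun fun n => by ring

theorem strictAntiOn_one_sub_rpow_mul_tsum (hs : ∀ n, s n ≠ 0)
    (hratio : Tendsto (fun n => s (n + 1) / s n) atTop (𝓝 1)) {β : ℝ}
    (hcoeff : ∀ n : ℕ, (n + 1 : ℝ) * s (n + 1) < (n + β) * s n) :
    StrictAntiOn (fun x => (1 - x) ^ β * ∑' n, s n * x ^ n) (Ioo 0 1) := by
  set F := fun y => ∑' n, s n * y ^ n
  set D := fun x => ∑' n : ℕ, (n + 1 : ℝ) * s (n + 1) * x ^ n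
  have habs : ∀ x ∈ Ioo (0 : ℝ) 1, |x| < 1 := fun x hx => by
    rw [abs_of_pos hx.1]; exact hx.2
  have hderiv : ∀ x ∈ Ioo (0 : ℝ) 1, HasDerivAt (fun x => (1 - x) ^ β * F x)
      ((1 - x) ^ (β - 1) * ((1 - x) * D x - β * F x)) x := by
    intro x hx
    have h1x : 0 < 1 - x := sub_pos.2 hx.2
    have hpow : HasDerivAt (fun y => (1 - y) ^ β) (-1 * β * (1 - x) ^ (β - 1)) x := by
      simpa using ((hasDerivAt_id x).const_sub 1).rpow_const (p := β) (Or.inl h1x.ne')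
    refine (hpow.mul (hasDerivAt_tsum_coeff_mul_pow hs hratio (habs x hx))).congr_deriv ?_
    rw [show (1 - x) ^ β = (1 - x) ^ (β - 1) * (1 - x) by
      rw [← Real.rpow_add_one h1x.ne', sub_add_cancel]]
    ring
  refine strictAntiOn_of_hasDerivWithinAt_neg (convex_Ioo 0 1)
    (fun x hx => (hderiv x hx).continuousAt.continuousWithinAt)
    (fun x hx => (hderiv x (interior_subset hx)).hasDerivWithinAt) fun x hx => ?_
  rw [interior_Ioo] at hx
  have hbracket : (1 - x) * D x - β * F x < 0 :=
    hasSum_lt (f := fun n : ℕ => ((n + 1 : ℝ) * s (n + 1) - (n + β) * s n) * x ^ n) (i := 0)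
      (fun n => mul_nonpos_of_nonpos_of_nonneg (sub_nonpos.2 (hcoeff n).le)
        (pow_nonneg hx.1.le n))
      (by simpa using hcoeff 0) (hasSum_one_sub_mul_sub_mul hs hratio (habs x hx) β) hasSum_zero
  exact mul_neg_of_pos_of_neg (Real.rpow_pos_of_pos (sub_pos.2 hx.2) _) hbracket

end PowerSeries

noncomputable def hypergCoeff (a b c : ℝ) (n : ℕ) : ℝ :=
  Real.Gamma (a + n) * Real.Gamma (b + n) * Real.Gamma c /
    (Real.Gamma a * Real.Gamma b * Real.Gamma (c + n)) / (n.factorial : ℝ)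

lemma hyperg_eq_tsum (a b c x : ℝ) : hyperg a b c x = ∑' n, hypergCoeff a b c n * x ^ n :=
  tsum_congr fun n => by rw [hypergCoeff]; ring

section Hypergeometric

variable {a b c : ℝ}

lemma hypergCoeff_pos (ha : 0 < a) (hb : 0 < b) (hc : 0 < c) (n : ℕ) :
    0 < hypergCoeff a b c n := by
  have := Real.Gamma_pos_of_pos (show 0 < a + n by positivity)
  have := Real.Gamma_pos_of_pos (show 0 < b + n by positivity)
  have := Real.Gamma_pos_of_pos (show 0 < c + n by positivity)
  have := Real.Gamma_pos_of_pos ha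
  have := Real.Gamma_pos_of_pos hb
  have := Real.Gamma_pos_of_pos hc
  unfold hypergCoeff
  positivity

lemma hypergCoeff_succ (ha : 0 < a) (hb : 0 < b) (hc : 0 < c) (n : ℕ) :
    hypergCoeff a b c (n + 1) = (a + n) * (b + n) / ((c + n) * (n + 1)) * hypergCoeff a b c n := by
  have hΓ : ∀ z : ℝ, 0 < z → Real.Gamma (z + (n + 1 : ℕ)) = (z + n) * Real.Gamma (z + n) :=
    fun z hz => by
      rw [Nat.cast_succ, ← add_assoc, Real.Gamma_add_one (by positivity)]
  have := (Real.Gamma_pos_of_pos ha).ne'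
  have := (Real.Gamma_pos_of_pos hb).ne'
  have := (Real.Gamma_pos_of_pos hc).ne'
  have := (Real.Gamma_pos_of_pos (show 0 < c + n by positivity)).ne'
  have : (c + n) ≠ 0 := by positivity
  unfold hypergCoeff
  rw [hΓ a ha, hΓ b hb, hΓ c hc, Nat.factorial_succ, Nat.cast_mul]
  field_simp
  push_cast
  ring

lemma tendsto_hypergCoeff_succ_div (ha : 0 < a) (hb : 0 < b) (hc : 0 < c) :
    Tendsto (fun n => hypergCoeff a b c (n + 1) / hypergCoeff a b c n) atTop (𝓝 1) := by
  have hlin : ∀ u v : ℝ, Tendsto (fun n : ℕ => (u + 1 * (n : ℝ)) / (v + 1 * n)) atTop (𝓝 (1 / 1)) :=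
    fun u v => tendsto_add_mul_div_add_mul_atTop_nhds u v 1 one_ne_zero
  rw [show (𝓝 (1 : ℝ)) = 𝓝 (1 / 1 * (1 / 1)) by norm_num]
  refine ((hlin a c).mul (hlin b 1)).congr fun n => ?_
  rw [hypergCoeff_succ ha hb hc, mul_div_assoc, div_self (hypergCoeff_pos ha hb hc n).ne', mul_one,
    div_mul_div_comm]
  congr 1 <;> ring

lemma hyperg_pos (ha : 0 < a) (hb : 0 < b) (hc : 0 < c) {x : ℝ} (hx0 : 0 ≤ x) (hx1 : x < 1) :
    0 < hyperg a b c x := by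
  rw [hyperg_eq_tsum]
  refine (summable_coeff_mul_pow (fun n => (hypergCoeff_pos ha hb hc n).ne')
    (tendsto_hypergCoeff_succ_div ha hb hc) (by rwa [abs_of_nonneg hx0])).tsum_pos
    (fun n => mul_nonneg (hypergCoeff_pos ha hb hc n).le (pow_nonneg hx0 n)) 0 ?_
  simpa using hypergCoeff_pos ha hb hc 0

theorem strictAntiOn_one_sub_rpow_mul_hyperg (ha : 0 < a) (hb : 0 < b) (hc : 0 < c) {β : ℝ}
    (hab : a + b ≤ 2 * β) (hβc : β < c) :
    StrictAntiOn (fun x => (1 - x) ^ β * hyperg a b c x) (Ioo 0 1) := by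
  simp only [hyperg_eq_tsum]
  refine strictAntiOn_one_sub_rpow_mul_tsum (fun n => (hypergCoeff_pos ha hb hc n).ne')
    (tendsto_hypergCoeff_succ_div ha hb hc) fun n => ?_
  -- AM-GM: `(a + n)(b + n) ≤ ((a + b)/2 + n)² ≤ (β + n)² < (β + n)(c + n)`
  have hAMGM : (a + n) * (b + n) < (n + β) * (c + n) := by
    have hnβ : (0 : ℝ) < n + β := by linarith [n.cast_nonneg (α := ℝ)]
    nlinarith [sq_nonneg (a - b), mul_pos hnβ (sub_pos.2 hβc)]
  rw [hypergCoeff_succ ha hb hc, ← mul_assoc]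
  refine mul_lt_mul_of_pos_right ?_ (hypergCoeff_pos ha hb hc n)
  rw [mul_div_assoc', div_lt_iff₀ (by positivity)]
  nlinarith [hAMGM]

end Hypergeometric

section HalfAngle

-- With `ρ = 2 tan (θ/2)`, these are `cos θ` and `sin θ`.
lemma sq_div_add_sq_div {ρ : ℝ} :
    ((4 - ρ ^ 2) / (4 + ρ ^ 2)) ^ 2 + (4 * ρ / (4 + ρ ^ 2)) ^ 2 = 1 := by
  have : (4 + ρ ^ 2) ≠ 0 := by positivity
  field_simp
  ring

lemma sq_div_mem_Ioo {ρ : ℝ} (hρ : ρ ∈ Ioo 0 2) : ((4 - ρ ^ 2) / (4 + ρ ^ 2)) ^ 2 ∈ Ioo 0 1 := by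
  obtain ⟨h0, h2⟩ := hρ
  have hpos : 0 < (4 - ρ ^ 2) / (4 + ρ ^ 2) := div_pos (by nlinarith) (by positivity)
  refine ⟨by positivity, ?_⟩
  nlinarith [sq_div_add_sq_div (ρ := ρ), show 0 < 4 * ρ / (4 + ρ ^ 2) by positivity]

lemma strictAntiOn_sq_div :
    StrictAntiOn (fun ρ : ℝ => ((4 - ρ ^ 2) / (4 + ρ ^ 2)) ^ 2) (Ioo 0 2) := by
  intro ρ hρ σ hσ hρσ
  have hσ' : 0 ≤ (4 - σ ^ 2) / (4 + σ ^ 2) := div_nonneg (by nlinarith [hσ.2, hσ.1]) (by positivity)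
  have hlt : (4 - σ ^ 2) / (4 + σ ^ 2) < (4 - ρ ^ 2) / (4 + ρ ^ 2) := by
    rw [div_lt_div_iff₀ (by positivity) (by positivity)]
    nlinarith [hρ.1]
  exact pow_lt_pow_left₀ hlt hσ' two_ne_zero

lemma div_rpow_two_mul_eq {ρ : ℝ} (hρ : 0 ≤ ρ) (β : ℝ) :
    (4 * ρ / (4 + ρ ^ 2)) ^ (2 * β) = (1 - ((4 - ρ ^ 2) / (4 + ρ ^ 2)) ^ 2) ^ β := by
  rw [Real.rpow_mul (by positivity), ← sq_div_add_sq_div (ρ := ρ), add_sub_cancel_left]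
  norm_cast

theorem strictMonoOn_rpow_mul_comp_sq_div {g : ℝ → ℝ} {β C e : ℝ}
    (hg : StrictAntiOn (fun η => (1 - η) ^ β * g η) (Ioo 0 1)) (hpos : ∀ η ∈ Ioo 0 1, 0 < g η)
    (hC : 0 < C) (he : 0 < e) :
    StrictMonoOn (fun ρ => (C * (4 * ρ / (4 + ρ ^ 2)) ^ (2 * β) *
      g (((4 - ρ ^ 2) / (4 + ρ ^ 2)) ^ 2)) ^ e) (Ioo 0 2) := by
  intro ρ hρ σ hσ hρσ
  simp only [mul_assoc, div_rpow_two_mul_eq hρ.1.le, div_rpow_two_mul_eq hσ.1.le]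
  have hη := sq_div_mem_Ioo hρ
  refine Real.rpow_lt_rpow (mul_pos hC (mul_pos (Real.rpow_pos_of_pos (sub_pos.2 hη.2) _)
    (hpos _ hη))).le (mul_lt_mul_of_pos_left ?_ hC) he
  exact hg.comp strictAntiOn_sq_div (fun _ => sq_div_mem_Ioo) hρ hσ hρσ

end HalfAngle

theorem stmt19_general (N : ℕ) (γ p : ℝ) (hγ0 : 0 < γ)
    (hNγ : 2 * γ < (N : ℝ))
    (hp1 : (N : ℝ) / ((N : ℝ) - 2 * γ) < p) :
    StrictAntiOn
        (fun η : ℝ =>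
          (1 - η) ^ (((N : ℝ) - 2 * γ) / 4) *
            hyperg (γ / (p - 1)) (((N : ℝ) - 2 * γ) / 2 - γ / (p - 1)) ((N : ℝ) / 2) η)
        (Set.Ioo 0 1) ∧
      StrictMonoOn
        (fun ρ : ℝ =>
          ((Real.Gamma ((N : ℝ) / 2) * Real.Gamma γ /
                (Real.Gamma (γ + γ / (p - 1)) * Real.Gamma ((N : ℝ) / 2 - γ / (p - 1))))⁻¹ *
              (4 * ρ / (4 + ρ ^ 2)) ^ (((N : ℝ) - 2 * γ) / 2) *
              hyperg (γ / (p - 1)) (((N : ℝ) - 2 * γ) / 2 - γ / (p - 1)) ((N : ℝ) / 2)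
                (((4 - ρ ^ 2) / (4 + ρ ^ 2)) ^ 2)) ^ (2 / ((N : ℝ) - 2 * γ)))
        (Set.Ioo 0 2) := by
  have hN2γ : 0 < (N : ℝ) - 2 * γ := by linarith
  have hp : 2 * γ < (p - 1) * ((N : ℝ) - 2 * γ) := by
    rw [div_lt_iff₀ hN2γ] at hp1; linarith
  have hp0 : 0 < p - 1 := pos_of_mul_pos_left (by linarith) hN2γ.le
  set a := γ / (p - 1)
  set b := ((N : ℝ) - 2 * γ) / 2 - a with hbdef
  have ha : 0 < a := div_pos hγ0 hp0
  have hb : 0 < b := by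
    rw [sub_pos, div_lt_iff₀ hp0]; linarith
  have hc : 0 < (N : ℝ) / 2 := by linarith
  have hanti := strictAntiOn_one_sub_rpow_mul_hyperg ha hb hc
    (β := ((N : ℝ) - 2 * γ) / 4) (by linarith) (by linarith)
  refine ⟨hanti, ?_⟩
  have := Real.Gamma_pos_of_pos hc
  have := Real.Gamma_pos_of_pos hγ0
  have := Real.Gamma_pos_of_pos (add_pos hγ0 ha)
  have := Real.Gamma_pos_of_pos (show 0 < (N : ℝ) / 2 - a by linarith)
  rw [show ((N : ℝ) - 2 * γ) / 2 = 2 * (((N : ℝ) - 2 * γ) / 4) by ring]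
  exact strictMonoOn_rpow_mul_comp_sq_div hanti
    (fun η hη => hyperg_pos ha hb hc hη.1.le hη.2) (by positivity) (by positivity)

/-- Monotonicity of the special defining function: the function
`f(η) = (1-η)^{(N-2γ)/4} ₂F₁(γ/(p-1), (N-2γ)/2 - γ/(p-1); N/2; η)` is strictly
decreasing on `(0,1)`, and equivalently
`ρ*(ρ) = [α⁻¹ (4ρ/(4+ρ²))^{(N-2γ)/2} ₂F₁(γ/(p-1), (N-2γ)/2-γ/(p-1); N/2; ((4-ρ²)/(4+ρ²))²)]^{2/(N-2γ)}`
is strictly increasing on `(0,2)`, where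
`α = Γ(N/2)Γ(γ)/(Γ(γ+γ/(p-1))Γ(N/2-γ/(p-1)))`. -/
theorem stmt19 (N : ℕ) (hN : 2 ≤ N) (γ p : ℝ) (hγ0 : 0 < γ) (hγ1 : γ < 1)
    (hNγ : 2 * γ < (N : ℝ))
    (hp1 : (N : ℝ) / ((N : ℝ) - 2 * γ) < p)
    (hp2 : p < ((N : ℝ) + 2 * γ) / ((N : ℝ) - 2 * γ)) :
    StrictAntiOn
        (fun η : ℝ =>
          (1 - η) ^ (((N : ℝ) - 2 * γ) / 4) *
            hyperg (γ / (p - 1)) (((N : ℝ) - 2 * γ) / 2 - γ / (p - 1)) ((N : ℝ) / 2) η)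
        (Set.Ioo 0 1) ∧
      StrictMonoOn
        (fun ρ : ℝ =>
          ((Real.Gamma ((N : ℝ) / 2) * Real.Gamma γ /
                (Real.Gamma (γ + γ / (p - 1)) * Real.Gamma ((N : ℝ) / 2 - γ / (p - 1))))⁻¹ *
              (4 * ρ / (4 + ρ ^ 2)) ^ (((N : ℝ) - 2 * γ) / 2) *
              hyperg (γ / (p - 1)) (((N : ℝ) - 2 * γ) / 2 - γ / (p - 1)) ((N : ℝ) / 2)
                (((4 - ρ ^ 2) / (4 + ρ ^ 2)) ^ 2)) ^ (2 / ((N : ℝ) - 2 * γ)))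
        (Set.Ioo 0 2) :=
  stmt19_general N γ p hγ0 hNγ hp1
end
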